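/- arXiv:2601.00193 — 8 statements merged into one kernel-verified Lean document; each statement's English description precedes it below -/
import Mathlib

section
/- Let w be a periodic grid function such that w_{p₀} = 0 for some p₀ ∈ ℤ. Then ‖w‖_∞ ≤ (√L / 2) · |w|_1. -/
open Finset

/-- A periodic grid function with period `M`. -/
def Periodic (M : ℕ) (w : ℤ → ℝ) : Prop := ∀ p : ℤ, w (p + (M : ℤ)) = w p

/-- Discrete inner product `⟨v,w⟩ = h ∑_{p=1}^M v_p w_p`. -/
noncomputable def ip (M : ℕ) (h : ℝ) (v w : ℤ → ℝ) : ℝ :=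
  h * ∑ p ∈ Finset.Icc (1 : ℤ) (M : ℤ), v p * w p

/-- Discrete L² norm `‖w‖ = √⟨w,w⟩`. -/
noncomputable def nrm (M : ℕ) (h : ℝ) (w : ℤ → ℝ) : ℝ := Real.sqrt (ip M h w w)

/-- Discrete H¹ seminorm `|w|₁`. -/
noncomputable def snorm1 (M : ℕ) (h : ℝ) (w : ℤ → ℝ) : ℝ :=
  Real.sqrt (h * ∑ p ∈ Finset.Icc (1 : ℤ) (M : ℤ), ((w p - w (p - 1)) / h) ^ 2)

/-- Centered difference operator `(Δ_x w)_p = (w_{p+1} − w_{p−1})/(2h)`. -/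
noncomputable def Dx (h : ℝ) (w : ℤ → ℝ) : ℤ → ℝ :=
  fun p => (w (p + 1) - w (p - 1)) / (2 * h)

/-- Second difference operator `(δ_xx w)_p = (w_{p+1} − 2w_p + w_{p−1})/h²`. -/
noncomputable def Dxx (h : ℝ) (w : ℤ → ℝ) : ℤ → ℝ :=
  fun p => (w (p + 1) - 2 * w p + w (p - 1)) / h ^ 2

/-- Discrete nonlinear operator `Ψ(v,w)_p = (1/3)(v_p (Δ_x w)_p + (Δ_x (vw))_p)`. -/
noncomputable def Psi (h : ℝ) (v w : ℤ → ℝ) : ℤ → ℝ :=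
  fun p => (1 / 3) * (v p * Dx h w p + Dx h (fun q => v q * w q) p)

private lemma per_mul {M : ℕ} {w : ℤ → ℝ} (hw : Periodic M w) (p : ℤ) :
    ∀ t : ℤ, w (p + M * t) = w p := by
  intro t
  induction t using Int.induction_on with
  | zero => simp
  | succ n ih =>
      have h1 := hw (p + M * n)
      rw [show p + (M:ℤ) * ((n:ℤ) + 1) = p + M * n + M by ring, h1, ih]
  | pred n ih =>
      have h1 := hw (p + M * (-(n:ℤ) - 1))
      rw [show p + (M:ℤ) * (-(n:ℤ) - 1) + M = p + M * (-(n:ℤ)) by ring] at h1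
      rw [← h1]; exact ih

private lemma telNat (w : ℤ → ℝ) (a : ℤ) :
    ∀ n : ℕ, ∑ j ∈ Finset.Ioc a (a + n), (w j - w (j - 1)) = w (a + n) - w a := by
  intro n
  induction n with
  | zero => simp
  | succ n ih =>
      have e : Finset.Ioc a (a + (n+1 : ℕ)) = insert (a + n + 1) (Finset.Ioc a (a + n)) := by
        ext x; simp only [Finset.mem_Ioc, Finset.mem_insert]; push_cast; omega
      rw [e, Finset.sum_insert (by simp), ih]
      have e2 : a + (n + 1 : ℕ) = a + n + 1 := by push_cast; ring
      have e3 : a + n + 1 - 1 = a + n := by ring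
      rw [e2, e3]; ring

private lemma tel (w : ℤ → ℝ) (a b : ℤ) (hb : a ≤ b) :
    ∑ j ∈ Finset.Ioc a b, (w j - w (j - 1)) = w b - w a := by
  have e : b = a + ((b - a).toNat : ℤ) := by
    rw [Int.toNat_of_nonneg (by omega)]; ring
  rw [e]; exact telNat w a _

private lemma window_sum (M : ℕ) (hM : 1 ≤ M) (f : ℤ → ℝ) (hf : ∀ p : ℤ, f (p + M) = f p) :
    ∀ a : ℤ, ∑ j ∈ Finset.Ioc a (a + M), f j = ∑ j ∈ Finset.Ioc 0 (M : ℤ), f j := by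
  have hM' : (1:ℤ) ≤ M := by exact_mod_cast hM
  have step : ∀ a : ℤ, ∑ j ∈ Finset.Ioc (a+1) (a+1+M), f j = ∑ j ∈ Finset.Ioc a (a+M), f j := by
    intro a
    have e1 : Finset.Ioc a (a+M) = insert (a+1) (Finset.Ioc (a+1) (a+M)) := by
      ext x; simp only [Finset.mem_Ioc, Finset.mem_insert]; omega
    have e2 : Finset.Ioc (a+1) (a+1+M) = insert (a+1+M) (Finset.Ioc (a+1) (a+M)) := by
      ext x; simp only [Finset.mem_Ioc, Finset.mem_insert]; omega
    rw [e1, e2, Finset.sum_insert (by simp), Finset.sum_insert (by simp)]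
    have hfa : f (a+1+M) = f (a+1) := by
      have := hf (a+1); rw [← this]
    rw [hfa]
  intro a
  induction a using Int.induction_on with
  | zero => simp
  | succ n ih => rw [step]; exact ih
  | pred n ih =>
      have h1 := step (-(n:ℤ) - 1)
      rw [show (-(n:ℤ) - 1 + 1) = -(n:ℤ) by ring] at h1
      rw [← h1]; exact ih

/-- If `w` is a periodic grid function vanishing at some node, then
`‖w‖_∞ ≤ (√L / 2) · |w|₁`. -/
theorem stmt_0 (M : ℕ) (hM : 3 ≤ M) (h : ℝ) (hh : 0 < h) (L : ℝ) (hL : L = M * h)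
    (w : ℤ → ℝ) (hw : Periodic M w) (p₀ : ℤ) (hp₀ : w p₀ = 0) :
    ∀ p : ℤ, 1 ≤ p → p ≤ (M : ℤ) → |w p| ≤ Real.sqrt L / 2 * snorm1 M h w := by
  intro p _ _
  have hMpos : (0:ℤ) < M := by exact_mod_cast Nat.pos_of_ne_zero (by omega)
  set d : ℤ → ℝ := fun j => w j - w (j - 1) with hd
  have hdper : ∀ j : ℤ, d (j + M) = d j := by
    intro j
    have h1 := hw j
    have h2 := hw (j - 1)
    simp only [hd]
    rw [show j + (M:ℤ) - 1 = j - 1 + M by ring, h1, h2]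
  -- choose the zero node q with q ≤ p < q + M
  set q : ℤ := p - (p - p₀) % M with hq
  have hq0 : w q = 0 := by
    have e : q = p₀ + M * ((p - p₀) / M) := by
      have := Int.emod_add_mul_ediv (p - p₀) M
      omega
    rw [e, per_mul hw, hp₀]
  have hqle : q ≤ p := by
    have := Int.emod_nonneg (p - p₀) (ne_of_gt hMpos); omega
  have hplt : p ≤ q + M := by
    have := Int.emod_lt_of_pos (p - p₀) hMpos; omega
  -- sums of squares
  set A : ℝ := ∑ j ∈ Finset.Ioc q p, d j ^ 2 with hA
  set B : ℝ := ∑ j ∈ Finset.Ioc p (q + M), d j ^ 2 with hB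
  set D : ℝ := ∑ j ∈ Finset.Ioc 0 (M : ℤ), d j ^ 2 with hD
  have hA0 : 0 ≤ A := Finset.sum_nonneg fun j _ => sq_nonneg _
  have hB0 : 0 ≤ B := Finset.sum_nonneg fun j _ => sq_nonneg _
  have hD0 : 0 ≤ D := Finset.sum_nonneg fun j _ => sq_nonneg _
  have hABD : A + B = D := by
    have hsplit : A + B = ∑ j ∈ Finset.Ioc q (q + M), d j ^ 2 := by
      rw [hA, hB, ← Finset.sum_union (by
        apply Finset.disjoint_left.2; intro x hx hx'
        simp only [Finset.mem_Ioc] at hx hx'; omega),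
        Finset.Ioc_union_Ioc_eq_Ioc hqle hplt]
    rw [hsplit, hD]
    exact window_sum M (by omega) (fun j => d j ^ 2)
      (fun j => by show d (j + M) ^ 2 = d j ^ 2; rw [hdper]) q
  -- Cauchy–Schwarz on both paths
  have cs : ∀ a b : ℤ, a ≤ b → (w b - w a) ^ 2 ≤ ((b - a : ℤ) : ℝ) * ∑ j ∈ Finset.Ioc a b, d j ^ 2 := by
    intro a b hab
    have h1 : ∑ j ∈ Finset.Ioc a b, d j = w b - w a := tel w a b hab
    have h2 := Finset.sum_mul_sq_le_sq_mul_sq (Finset.Ioc a b) (fun _ => (1:ℝ)) d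
    simp only [one_mul, one_pow] at h2
    have hcard : (∑ _j ∈ Finset.Ioc a b, (1:ℝ)) = ((b - a : ℤ) : ℝ) := by
      rw [Finset.sum_const, Int.card_Ioc, nsmul_eq_mul, mul_one]
      have := Int.toNat_of_nonneg (show (0:ℤ) ≤ b - a by omega)
      exact_mod_cast congrArg (fun z : ℤ => (z : ℝ)) this
    rw [h1, hcard] at h2
    exact h2
  have hfw : (w p) ^ 2 ≤ ((p - q : ℤ) : ℝ) * A := by
    have := cs q p hqle
    rw [hq0, sub_zero] at this
    exact this
  have hbw : (w p) ^ 2 ≤ ((q + M - p : ℤ) : ℝ) * B := by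
    have := cs p (q + M) hplt
    have hz : w (q + M) = 0 := by rw [hw q, hq0]
    rw [hz, zero_sub, neg_sq] at this
    exact this
  -- combine: 4 (w p)^2 ≤ M * D
  have hk0 : (0:ℝ) ≤ ((p - q : ℤ) : ℝ) := by exact_mod_cast (by omega : (0:ℤ) ≤ p - q)
  have hl0 : (0:ℝ) ≤ ((q + M - p : ℤ) : ℝ) := by exact_mod_cast (by omega : (0:ℤ) ≤ q + M - p)
  have hkl : ((p - q : ℤ) : ℝ) + ((q + M - p : ℤ) : ℝ) = (M : ℝ) := by push_cast; ring
  have key : 4 * (w p) ^ 2 ≤ (M : ℝ) * D := by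
    set k := ((p - q : ℤ) : ℝ)
    set l := ((q + M - p : ℤ) : ℝ)
    have h4 : (w p)^2 * (w p)^2 ≤ (k * A) * (l * B) :=
      mul_le_mul hfw hbw (sq_nonneg (w p)) (mul_nonneg hk0 hA0)
    have hu0 : 0 ≤ k * B + l * A :=
      add_nonneg (mul_nonneg hk0 hB0) (mul_nonneg hl0 hA0)
    have hprod : (2 * (w p)^2)^2 ≤ (k * B + l * A)^2 := by
      nlinarith [h4, sq_nonneg (k * B - l * A)]
    have h5 := Real.sqrt_le_sqrt hprod
    rw [Real.sqrt_sq (by positivity), Real.sqrt_sq hu0] at h5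
    have hMD : (M:ℝ) * D = k * A + k * B + l * A + l * B := by
      rw [← hkl, ← hABD]; ring
    linarith [hfw, hbw, h5]
  -- rewrite the RHS
  have hMD0 : (0:ℝ) ≤ (M:ℝ) * D := mul_nonneg (by positivity) hD0
  have hRHS : Real.sqrt L / 2 * snorm1 M h w = Real.sqrt ((M:ℝ) * D) / 2 := by
    have hIcc : Finset.Icc (1:ℤ) (M:ℤ) = Finset.Ioc (0:ℤ) (M:ℤ) := by
      ext x; simp only [Finset.mem_Icc, Finset.mem_Ioc]; omega
    have hsum : h * ∑ j ∈ Finset.Icc (1:ℤ) (M:ℤ), ((w j - w (j - 1)) / h) ^ 2 = D / h := by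
      rw [hIcc]
      rw [Finset.mul_sum]
      rw [hD, Finset.sum_div]
      apply Finset.sum_congr rfl
      intro j _
      simp only [hd]
      field_simp
    rw [snorm1, hsum, hL]
    rw [div_mul_eq_mul_div, ← Real.sqrt_mul (by positivity)]
    congr 2
    field_simp
  rw [hRHS]
  have hhalf : Real.sqrt ((M:ℝ) * D / 4) = Real.sqrt ((M:ℝ) * D) / 2 := by
    rw [show ((M:ℝ) * D / 4) = ((M:ℝ) * D) * (1/2)^2 by ring, Real.sqrt_mul hMD0,
      Real.sqrt_sq (by norm_num : (0:ℝ) ≤ 1/2)]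
    ring
  calc |w p| = Real.sqrt ((w p) ^ 2) := (Real.sqrt_sq_eq_abs _).symm
    _ ≤ Real.sqrt ((M:ℝ) * D / 4) := Real.sqrt_le_sqrt (by linarith)
    _ = Real.sqrt ((M:ℝ) * D) / 2 := hhalf
end

section
/- Let w be a periodic grid function such that w_{p₀} = 0 for some p₀ ∈ ℤ. Then ‖w‖ ≤ (L/√6) · |w|_1. -/
open Finset

lemma s1 (n : ℕ) : ∑ k ∈ range n, ((k:ℝ)+1) = (n:ℝ)*((n:ℝ)+1)/2 := by
  induction n with
  | zero => simp
  | succ n ih => rw [sum_range_succ, ih]; push_cast; ring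

lemma s2 (n : ℕ) : ∑ k ∈ range n, ((k:ℝ)+1)^2 = (n:ℝ)*((n:ℝ)+1)*(2*(n:ℝ)+1)/6 := by
  induction n with
  | zero => simp
  | succ n ih => rw [sum_range_succ, ih]; push_cast; ring

lemma sum_aux (n : ℕ) : ∑ k ∈ range n, (((k:ℝ)+1) * ((n:ℝ) - ((k:ℝ)+1))) ≤ (n:ℝ)^3/6 := by
  have e : ∑ k ∈ range n, (((k:ℝ)+1) * ((n:ℝ) - ((k:ℝ)+1)))
      = (n:ℝ) * (∑ k ∈ range n, ((k:ℝ)+1)) - ∑ k ∈ range n, ((k:ℝ)+1)^2 := by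
    rw [mul_sum, ← sum_sub_distrib]
    exact sum_congr rfl fun k _ => by ring
  rw [e, s1, s2]
  have hn : (0:ℝ) ≤ n := Nat.cast_nonneg n
  nlinarith

lemma window_step (M : ℕ) (hM : 1 ≤ M) (f : ℤ → ℝ) (hf : ∀ p, f (p + M) = f p) (i : ℤ) :
    ∑ p ∈ Icc (i+1+1) (i+1+(M:ℤ)), f p = ∑ p ∈ Icc (i+1) (i+(M:ℤ)), f p := by
  have hM' : (1:ℤ) ≤ M := by exact_mod_cast hM
  have h1 : Icc (i+1+1) (i+1+(M:ℤ)) = insert (i+1+(M:ℤ)) (Icc (i+1+1) (i+(M:ℤ))) := by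
    ext p; simp only [Finset.mem_Icc, Finset.mem_insert]; omega
  have h2 : Icc (i+1) (i+(M:ℤ)) = insert (i+1) (Icc (i+1+1) (i+(M:ℤ))) := by
    ext p; simp only [Finset.mem_Icc, Finset.mem_insert]; omega
  rw [h1, h2, Finset.sum_insert (by simp only [Finset.mem_Icc]; omega),
     Finset.sum_insert (by simp only [Finset.mem_Icc]; omega)]
  rw [hf (i+1)]

lemma window_shift (M : ℕ) (hM : 1 ≤ M) (f : ℤ → ℝ) (hf : ∀ p, f (p + M) = f p) (a : ℤ) :
    ∑ p ∈ Icc (a+1) (a+(M:ℤ)), f p = ∑ p ∈ Icc 1 (M:ℤ), f p := by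
  induction a using Int.induction_on with
  | zero => simp
  | succ i ih => rw [window_step M hM f hf i]; exact ih
  | pred i ih =>
      have step := window_step M hM f hf (-(i:ℤ)-1)
      rw [show (-(i:ℤ)-1+1+1) = -(i:ℤ)+1 by ring,
          show (-(i:ℤ)-1+1+(M:ℤ)) = -(i:ℤ)+(M:ℤ) by ring,
          show (-(i:ℤ)-1+1) = -(i:ℤ) by ring] at step
      rw [show (-(i:ℤ)-1+1) = -(i:ℤ) by ring]
      rw [← step]
      exact ih


lemma sum_Icc_int_eq_range (M : ℕ) (f : ℤ → ℝ) :
    ∑ p ∈ Icc (1:ℤ) (M:ℤ), f p = ∑ k ∈ range M, f ((k:ℤ)+1) := by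
  have he : Icc (1:ℤ) (M:ℤ)
      = (range M).map ⟨fun k : ℕ => (k:ℤ)+1, fun a b hab => by simpa using hab⟩ := by
    ext p
    simp only [Finset.mem_Icc, Finset.mem_map, Finset.mem_range, Function.Embedding.coeFn_mk]
    constructor
    · intro ⟨h1, h2⟩; exact ⟨(p-1).toNat, by omega, by show ((p-1).toNat : ℤ) + 1 = p; omega⟩
    · rintro ⟨k, hk, rfl⟩; show 1 ≤ (k:ℤ) + 1 ∧ (k:ℤ) + 1 ≤ M; omega
  rw [he, Finset.sum_map]
  rfl

lemma periodic_window (M : ℕ) (hM : 1 ≤ M) (f : ℤ → ℝ) (hf : ∀ p, f (p + M) = f p) (a : ℤ) :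
    ∑ p ∈ Icc (1:ℤ) (M:ℤ), f p = ∑ k ∈ range M, f (a + ((k:ℤ)+1)) := by
  rw [← window_shift M hM f hf a, ← Finset.map_add_left_Icc, Finset.sum_map]
  simp only [addLeftEmbedding_apply]
  exact sum_Icc_int_eq_range M (fun p => f (a + p))


lemma core_bound (M : ℕ) (u : ℕ → ℝ) (hu0 : u 0 = 0) (huM : u M = 0)
    (k : ℕ) (hk : k < M) :
    (M:ℝ) * u (k+1)^2
      ≤ (((k:ℝ)+1) * ((M:ℝ) - ((k:ℝ)+1))) * ∑ j ∈ range M, (u (j+1) - u j)^2 := by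
  set d : ℕ → ℝ := fun j => u (j+1) - u j with hd
  set S := ∑ j ∈ range M, d j ^ 2 with hSdef
  set A := ∑ j ∈ range (k+1), d j ^ 2 with hAdef
  set B := ∑ j ∈ Ico (k+1) M, d j ^ 2 with hBdef
  have hkM : k + 1 ≤ M := hk
  have hAB : A + B = S := by
    rw [hAdef, hBdef, hSdef, range_eq_Ico, range_eq_Ico]
    exact Finset.sum_Ico_consecutive _ (Nat.zero_le _) hkM
  have hu1 : u (k+1) = ∑ j ∈ range (k+1), d j := by
    rw [Finset.sum_range_sub u (k+1), hu0, sub_zero]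
  have htot : (∑ j ∈ range (k+1), d j) + (∑ j ∈ Ico (k+1) M, d j) = 0 := by
    have he : (∑ j ∈ range (k+1), d j) + (∑ j ∈ Ico (k+1) M, d j) = ∑ j ∈ range M, d j := by
      rw [range_eq_Ico, range_eq_Ico]
      exact Finset.sum_Ico_consecutive _ (Nat.zero_le _) hkM
    rw [he, Finset.sum_range_sub u M, hu0, huM, sub_zero]
  have hu2 : u (k+1) = - ∑ j ∈ Ico (k+1) M, d j := by rw [hu1]; linarith
  have cs1 : u (k+1)^2 ≤ ((k:ℝ)+1) * A := by
    have hcs := Finset.sum_mul_sq_le_sq_mul_sq (range (k+1)) d (fun _ => (1:ℝ))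
    simp only [mul_one, one_pow, sum_const, card_range, nsmul_eq_mul] at hcs
    rw [hu1]
    calc (∑ j ∈ range (k+1), d j)^2 ≤ (∑ j ∈ range (k+1), d j ^ 2) * ((k+1 : ℕ):ℝ) := hcs
      _ = ((k:ℝ)+1) * A := by rw [← hAdef]; push_cast; ring
  have cs2 : u (k+1)^2 ≤ ((M:ℝ) - ((k:ℝ)+1)) * B := by
    have hcs := Finset.sum_mul_sq_le_sq_mul_sq (Ico (k+1) M) d (fun _ => (1:ℝ))
    simp only [mul_one, one_pow, sum_const, Nat.card_Ico, nsmul_eq_mul] at hcs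
    have hc : ((M - (k+1) : ℕ):ℝ) = (M:ℝ) - ((k:ℝ)+1) := by
      rw [Nat.cast_sub hkM]; push_cast; ring
    rw [hu2, neg_sq]
    calc (∑ j ∈ Ico (k+1) M, d j)^2 ≤ (∑ j ∈ Ico (k+1) M, d j ^ 2) * ((M - (k+1) : ℕ):ℝ) := hcs
      _ = ((M:ℝ) - ((k:ℝ)+1)) * B := by rw [← hBdef, hc]; ring
  have hk1 : (0:ℝ) ≤ (k:ℝ)+1 := by positivity
  have hMk : (0:ℝ) ≤ (M:ℝ) - ((k:ℝ)+1) := by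
    have : ((k:ℝ)+1) ≤ (M:ℝ) := by exact_mod_cast hkM
    linarith
  have h1 := mul_le_mul_of_nonneg_left cs1 hMk
  have h2 := mul_le_mul_of_nonneg_left cs2 hk1
  calc (M:ℝ) * u (k+1)^2
      = ((M:ℝ) - ((k:ℝ)+1)) * u (k+1)^2 + ((k:ℝ)+1) * u (k+1)^2 := by ring
    _ ≤ ((M:ℝ) - ((k:ℝ)+1)) * (((k:ℝ)+1) * A) + ((k:ℝ)+1) * (((M:ℝ) - ((k:ℝ)+1)) * B) :=
        add_le_add h1 h2
    _ = (((k:ℝ)+1) * ((M:ℝ) - ((k:ℝ)+1))) * (A + B) := by ring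
    _ = (((k:ℝ)+1) * ((M:ℝ) - ((k:ℝ)+1))) * S := by rw [hAB]


/-- If `w` is a periodic grid function vanishing at some node, then
`‖w‖ ≤ (L/√6)·|w|₁`. -/
theorem stmt_2 (M : ℕ) (hM : 3 ≤ M) (h : ℝ) (hh : 0 < h) (L : ℝ) (hL : L = M * h)
    (w : ℤ → ℝ) (hw : Periodic M w) (p₀ : ℤ) (hp₀ : w p₀ = 0) :
    nrm M h w ≤ L / Real.sqrt 6 * snorm1 M h w := by
  have hM1 : 1 ≤ M := by omega
  set u : ℕ → ℝ := fun k => w (p₀ + (k:ℤ)) with hu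
  have hu0 : u 0 = 0 := by simpa [hu] using hp₀
  have huM : u M = 0 := by
    show w (p₀ + (M:ℤ)) = 0
    rw [hw p₀, hp₀]
  have hper1 : ∀ p : ℤ, w (p + M) * w (p + M) = w p * w p := fun p => by rw [hw p]
  have hper2 : ∀ p : ℤ, ((w (p+(M:ℤ)) - w (p+(M:ℤ)-1))/h)^2 = ((w p - w (p-1))/h)^2 := by
    intro p
    rw [hw p, show p + (M:ℤ) - 1 = (p-1) + M by ring, hw (p-1)]
  have hip : ip M h w w = h * ∑ k ∈ range M, u (k+1)^2 := by
    unfold ip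
    rw [periodic_window M hM1 (fun p => w p * w p) hper1 p₀]
    congr 1
    refine sum_congr rfl fun k _ => ?_
    show w (p₀ + ((k:ℤ)+1)) * w (p₀ + ((k:ℤ)+1)) = u (k+1)^2
    have he : p₀ + ((k:ℤ)+1) = p₀ + ((k+1:ℕ):ℤ) := by push_cast; ring
    rw [he]
    show w (p₀ + ((k+1:ℕ):ℤ)) * w (p₀ + ((k+1:ℕ):ℤ)) = (w (p₀ + ((k+1:ℕ):ℤ)))^2
    ring
  have hsn : h * ∑ p ∈ Icc (1:ℤ) (M:ℤ), ((w p - w (p-1))/h)^2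
      = (∑ k ∈ range M, (u (k+1) - u k)^2) / h := by
    rw [periodic_window M hM1 (fun p => ((w p - w (p-1))/h)^2) hper2 p₀]
    have hcg : ∀ k ∈ range M,
        ((w (p₀ + ((k:ℤ)+1)) - w (p₀ + ((k:ℤ)+1) - 1))/h)^2 = (u (k+1) - u k)^2 / h^2 := by
      intro k _
      rw [show p₀ + ((k:ℤ)+1) = p₀ + ((k+1:ℕ):ℤ) by push_cast; ring,
          show p₀ + ((k+1:ℕ):ℤ) - 1 = p₀ + ((k:ℕ):ℤ) by push_cast; ring]
      rw [div_pow]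
    rw [sum_congr rfl hcg, ← sum_div]
    field_simp
  set S := ∑ k ∈ range M, (u (k+1) - u k)^2 with hS
  have hS0 : 0 ≤ S := sum_nonneg fun _ _ => sq_nonneg _
  set T := ∑ k ∈ range M, u (k+1)^2 with hT
  have hT0 : 0 ≤ T := sum_nonneg fun _ _ => sq_nonneg _
  have hMpos : (0:ℝ) < M := by
    have : 0 < M := by omega
    exact_mod_cast this
  have hsum : (M:ℝ) * T ≤ ((M:ℝ)^3/6) * S := by
    calc (M:ℝ)*T = ∑ k ∈ range M, (M:ℝ) * u (k+1)^2 := by rw [hT, mul_sum]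
      _ ≤ ∑ k ∈ range M, (((k:ℝ)+1) * ((M:ℝ)-((k:ℝ)+1))) * S :=
          sum_le_sum fun k hk => core_bound M u hu0 huM k (mem_range.mp hk)
      _ = (∑ k ∈ range M, ((k:ℝ)+1) * ((M:ℝ)-((k:ℝ)+1))) * S := by rw [sum_mul]
      _ ≤ ((M:ℝ)^3/6) * S := mul_le_mul_of_nonneg_right (sum_aux M) hS0
  have hTb : T ≤ (M:ℝ)^2/6 * S := by
    rw [show (M:ℝ)^3/6*S = (M:ℝ)*((M:ℝ)^2/6*S) by ring] at hsum
    exact le_of_mul_le_mul_left hsum hMpos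
  have hL0 : 0 ≤ L := by rw [hL]; positivity
  unfold nrm snorm1
  rw [hip, hsn]
  have hrhs : L / Real.sqrt 6 * Real.sqrt (S/h) = Real.sqrt (L^2/6 * (S/h)) := by
    rw [Real.sqrt_mul (by positivity) (S/h)]
    congr 1
    rw [Real.sqrt_div (sq_nonneg L) 6, Real.sqrt_sq hL0]
  rw [hrhs]
  apply Real.sqrt_le_sqrt
  rw [hL]
  have he2 : ((M:ℝ)*h)^2/6 * (S/h) = (M:ℝ)^2/6*S*h := by field_simp
  rw [he2]
  calc h*T ≤ h * ((M:ℝ)^2/6*S) := mul_le_mul_of_nonneg_left hTb (le_of_lt hh)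
    _ = (M:ℝ)^2/6*S*h := by ring
end

section
/- For all periodic grid functions v and w, ⟨Ψ(v,w), w⟩ = 0. -/
open Finset

lemma shift_up (M : ℕ) (hM : 1 ≤ M) (f : ℤ → ℝ) (hf : ∀ p, f (p + (M:ℤ)) = f p) :
    ∑ p ∈ Icc (1:ℤ) (M:ℤ), f (p + 1) = ∑ p ∈ Icc (1:ℤ) (M:ℤ), f p := by
  have hM' : (1:ℤ) ≤ (M:ℤ) := by exact_mod_cast hM
  have h1 : ∑ p ∈ Icc (1:ℤ) (M:ℤ), f (p + 1) = ∑ p ∈ Icc (2:ℤ) ((M:ℤ)+1), f p := by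
    rw [show Icc (2:ℤ) ((M:ℤ)+1) = (Icc (1:ℤ) (M:ℤ)).map (addRightEmbedding 1) by
      rw [Finset.map_add_right_Icc]; norm_num, Finset.sum_map]
    rfl
  have e1 : Icc (1:ℤ) ((M:ℤ)+1) = insert ((M:ℤ)+1) (Icc 1 (M:ℤ)) := by
    ext x; simp; omega
  have e2 : Icc (1:ℤ) ((M:ℤ)+1) = insert 1 (Icc 2 ((M:ℤ)+1)) := by
    ext x; simp; omega
  have n1 : ((M:ℤ)+1) ∉ Icc (1:ℤ) (M:ℤ) := by simp
  have n2 : (1:ℤ) ∉ Icc (2:ℤ) ((M:ℤ)+1) := by simp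
  have key : f ((M:ℤ)+1) + ∑ p ∈ Icc (1:ℤ) (M:ℤ), f p
      = f 1 + ∑ p ∈ Icc (2:ℤ) ((M:ℤ)+1), f p := by
    rw [← Finset.sum_insert n1, ← Finset.sum_insert n2, ← e1, ← e2]
  have hfM : f ((M:ℤ)+1) = f 1 := by rw [show (M:ℤ)+1 = 1+(M:ℤ) by ring, hf]
  rw [h1]; linarith [key]

lemma shift_down (M : ℕ) (hM : 1 ≤ M) (f : ℤ → ℝ) (hf : ∀ p, f (p + (M:ℤ)) = f p) :
    ∑ p ∈ Icc (1:ℤ) (M:ℤ), f (p - 1) = ∑ p ∈ Icc (1:ℤ) (M:ℤ), f p := by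
  have := shift_up M hM (fun p => f (p - 1)) (fun p => by beta_reduce; rw [show p + (M:ℤ) - 1 = (p-1) + (M:ℤ) by ring, hf])
  simpa using this.symm

theorem stmt_7' (M : ℕ) (hM : 3 ≤ M) (h : ℝ) (hh : 0 < h)
    (v w : ℤ → ℝ) (hv : ∀ p:ℤ, v (p+(M:ℤ)) = v p) (hw : ∀ p:ℤ, w (p+(M:ℤ)) = w p) :
    h * ∑ p ∈ Icc (1:ℤ) (M:ℤ), ((1:ℝ)/3) * (v p * ((w (p+1) - w (p-1))/(2*h)) + ((v (p+1) * w (p+1) - v (p-1) * w (p-1))/(2*h))) * w p = 0 := by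
  have hM1 : 1 ≤ M := by omega
  have hne : h ≠ 0 := ne_of_gt hh
  have hg : ∀ p : ℤ, (fun q => v q * w q * w (q+1)) (p + (M:ℤ)) = (fun q => v q * w q * w (q+1)) p := by
    intro p; simp only []
    rw [hv, hw, show p+(M:ℤ)+1 = (p+1)+(M:ℤ) by ring, hw]
  have hk : ∀ p : ℤ, (fun q => v (q+1) * w q * w (q+1)) (p + (M:ℤ)) = (fun q => v (q+1) * w q * w (q+1)) p := by
    intro p; simp only []
    rw [show p+(M:ℤ)+1 = (p+1)+(M:ℤ) by ring, hv, hw, hw]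
  have hsum : ∑ p ∈ Icc (1:ℤ) (M:ℤ), ((1:ℝ)/3) * (v p * ((w (p+1) - w (p-1))/(2*h)) + ((v (p+1) * w (p+1) - v (p-1) * w (p-1))/(2*h))) * w p
      = (1/(6*h)) * ∑ p ∈ Icc (1:ℤ) (M:ℤ),
        ((v p * w p * w (p+1) - v (p-1) * w (p-1) * w ((p-1)+1))
          + (v (p+1) * w p * w (p+1) - v ((p-1)+1) * w (p-1) * w ((p-1)+1))) := by
    rw [Finset.mul_sum]
    apply Finset.sum_congr rfl
    intro p _
    have : (p-1)+1 = p := by ring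
    rw [this]
    field_simp
    ring
  rw [hsum]
  rw [Finset.sum_add_distrib, Finset.sum_sub_distrib, Finset.sum_sub_distrib]
  rw [show (∑ p ∈ Icc (1:ℤ) (M:ℤ), v (p-1) * w (p-1) * w ((p-1)+1))
      = ∑ p ∈ Icc (1:ℤ) (M:ℤ), (fun q => v q * w q * w (q+1)) (p-1) from rfl,
     show (∑ p ∈ Icc (1:ℤ) (M:ℤ), v ((p-1)+1) * w (p-1) * w ((p-1)+1))
      = ∑ p ∈ Icc (1:ℤ) (M:ℤ), (fun q => v (q+1) * w q * w (q+1)) (p-1) from rfl]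
  have H1 := shift_down M hM1 (fun q => v q * w q * w (q+1)) hg
  have H2 := shift_down M hM1 (fun q => v (q+1) * w q * w (q+1)) hk
  rw [H1, H2]
  beta_reduce
  ring

/-- `⟨Ψ(v,w), w⟩ = 0` for periodic grid functions `v`, `w`. -/
theorem stmt_7 (M : ℕ) (hM : 3 ≤ M) (h : ℝ) (hh : 0 < h) (L : ℝ) (hL : L = M * h)
    (v w : ℤ → ℝ) (hv : Periodic M v) (hw : Periodic M w) :
    ip M h (Psi h v w) w = 0 := by
  have key := stmt_7' M hM h hh v w hv hw
  rw [ip]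
  rw [show (∑ p ∈ Finset.Icc (1:ℤ) (M:ℤ), Psi h v w p * w p)
      = ∑ p ∈ Finset.Icc (1:ℤ) (M:ℤ), ((1:ℝ)/3) * (v p * ((w (p+1) - w (p-1))/(2*h)) + ((v (p+1) * w (p+1) - v (p-1) * w (p-1))/(2*h))) * w p from
    Finset.sum_congr rfl (fun p _ => by simp [Psi, Dx])]
  exact key
end

section
/- Let v, w, S be periodic grid functions satisfying w_p = (δ_xx v)_p − (h²/12)(δ_xx w)_p + S_p for all p ∈ ℤ. Then ⟨w, v⟩ = −|v|_1² − (h²/12)‖w‖² + (h⁴/144)|w|_1² + (h²/12)⟨w, S⟩ + ⟨S, v⟩. -/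
open Finset

lemma shift_sum (M : ℕ) (hM : 1 ≤ M) (f : ℤ → ℝ) (hf : ∀ p : ℤ, f (p + (M:ℤ)) = f p) :
    ∑ p ∈ Finset.Icc (1:ℤ) (M:ℤ), f (p + 1) = ∑ p ∈ Finset.Icc (1:ℤ) (M:ℤ), f p := by
  have h1 : ∑ p ∈ Finset.Icc (1:ℤ) (M:ℤ), f (p + 1)
      = ∑ p ∈ Finset.Icc (2:ℤ) ((M:ℤ)+1), f p := by
    rw [show (2:ℤ) = 1 + 1 by ring, ← Finset.map_add_right_Icc, Finset.sum_map]
    rfl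
  have e1 : Finset.Icc (2:ℤ) ((M:ℤ)+1) = insert ((M:ℤ)+1) (Finset.Icc 2 (M:ℤ)) := by
    ext x; simp; omega
  have e2 : Finset.Icc (1:ℤ) (M:ℤ) = insert (1:ℤ) (Finset.Icc 2 (M:ℤ)) := by
    have : (1:ℤ) ≤ M := by exact_mod_cast hM
    ext x; simp; omega
  have n1 : ((M:ℤ)+1) ∉ Finset.Icc (2:ℤ) (M:ℤ) := by simp
  have n2 : (1:ℤ) ∉ Finset.Icc (2:ℤ) (M:ℤ) := by simp
  rw [h1, e1, Finset.sum_insert n1, e2, Finset.sum_insert n2]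
  rw [show (M:ℤ)+1 = 1 + (M:ℤ) by ring, hf]

lemma shift_prod (M : ℕ) (hM : 1 ≤ M) (u z : ℤ → ℝ)
    (hu : ∀ p : ℤ, u (p + (M:ℤ)) = u p) (hz : ∀ p : ℤ, z (p + (M:ℤ)) = z p) :
    ∑ p ∈ Finset.Icc (1:ℤ) (M:ℤ), u (p+1) * z p
      = ∑ p ∈ Finset.Icc (1:ℤ) (M:ℤ), u p * z (p-1) := by
  have := shift_sum M hM (fun p => u p * z (p-1)) (by
    intro p
    rw [hu, show p + (M:ℤ) - 1 = (p - 1) + M by ring, hz])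
  simpa using this

/-- if `w = δ_xx v − (h²/12) δ_xx w + S` then
`⟨w,v⟩ = −|v|₁² − (h²/12)‖w‖² + (h⁴/144)|w|₁² + (h²/12)⟨w,S⟩ + ⟨S,v⟩`. -/
theorem stmt_8 (M : ℕ) (hM : 3 ≤ M) (h : ℝ) (hh : 0 < h) (L : ℝ) (hL : L = M * h)
    (v w S : ℤ → ℝ) (hv : Periodic M v) (hw : Periodic M w) (hS : Periodic M S)
    (hrel : ∀ p : ℤ, w p = Dxx h v p - h ^ 2 / 12 * Dxx h w p + S p) :
    ip M h w v
      = -(snorm1 M h v) ^ 2 - h ^ 2 / 12 * (nrm M h w) ^ 2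
        + h ^ 4 / 144 * (snorm1 M h w) ^ 2
        + h ^ 2 / 12 * ip M h w S + ip M h S v := by
  have hM1 : 1 ≤ M := by omega
  have hne : h ≠ 0 := ne_of_gt hh
  -- multiplied relation, free of division by h
  have hrel2 : ∀ p : ℤ, w p * h ^ 2
      = (v (p+1) - 2 * v p + v (p-1))
        - h ^ 2 / 12 * (w (p+1) - 2 * w p + w (p-1)) + S p * h ^ 2 := by
    intro p
    have e : w p * h ^ 2 = (Dxx h v p - h ^ 2 / 12 * Dxx h w p + S p) * h ^ 2 := by
      rw [hrel p]
    rw [e]; simp only [Dxx]; field_simp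
  -- shift identities
  have sh_vv : ∑ p ∈ Finset.Icc (1:ℤ) (M:ℤ), v (p+1) * v p
      = ∑ p ∈ Finset.Icc (1:ℤ) (M:ℤ), v p * v (p-1) := shift_prod M hM1 v v hv hv
  have sh_wv : ∑ p ∈ Finset.Icc (1:ℤ) (M:ℤ), w (p+1) * v p
      = ∑ p ∈ Finset.Icc (1:ℤ) (M:ℤ), w p * v (p-1) := shift_prod M hM1 w v hw hv
  have sh_vw : ∑ p ∈ Finset.Icc (1:ℤ) (M:ℤ), v (p+1) * w p
      = ∑ p ∈ Finset.Icc (1:ℤ) (M:ℤ), v p * w (p-1) := shift_prod M hM1 v w hv hw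
  have sh_ww : ∑ p ∈ Finset.Icc (1:ℤ) (M:ℤ), w (p+1) * w p
      = ∑ p ∈ Finset.Icc (1:ℤ) (M:ℤ), w p * w (p-1) := shift_prod M hM1 w w hw hw
  have sh_vmm : ∑ p ∈ Finset.Icc (1:ℤ) (M:ℤ), v (p-1) * v (p-1)
      = ∑ p ∈ Finset.Icc (1:ℤ) (M:ℤ), v p * v p := by
    have := shift_sum M hM1 (fun p => v (p-1) * v (p-1)) (by
      intro p
      rw [show p + (M:ℤ) - 1 = (p - 1) + M by ring, hv])
    simpa using this.symm
  have sh_wmm : ∑ p ∈ Finset.Icc (1:ℤ) (M:ℤ), w (p-1) * w (p-1)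
      = ∑ p ∈ Finset.Icc (1:ℤ) (M:ℤ), w p * w p := by
    have := shift_sum M hM1 (fun p => w (p-1) * w (p-1)) (by
      intro p
      rw [show p + (M:ℤ) - 1 = (p - 1) + M by ring, hw])
    simpa using this.symm
  -- E1': sum of hrel2 * v
  have E1 : (∑ p ∈ Finset.Icc (1:ℤ) (M:ℤ), w p * v p) * h ^ 2
      = 2 * (∑ p ∈ Finset.Icc (1:ℤ) (M:ℤ), v p * v (p-1))
        - 2 * (∑ p ∈ Finset.Icc (1:ℤ) (M:ℤ), v p * v p)
        - h ^ 2 / 12 * ((∑ p ∈ Finset.Icc (1:ℤ) (M:ℤ), w p * v (p-1))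
            - 2 * (∑ p ∈ Finset.Icc (1:ℤ) (M:ℤ), w p * v p)
            + (∑ p ∈ Finset.Icc (1:ℤ) (M:ℤ), w (p-1) * v p))
        + (∑ p ∈ Finset.Icc (1:ℤ) (M:ℤ), S p * v p) * h ^ 2 := by
    have pt : ∀ p ∈ Finset.Icc (1:ℤ) (M:ℤ), w p * v p * h ^ 2
        = (1:ℝ) * (v (p+1) * v p) + (-2:ℝ) * (v p * v p) + (1:ℝ) * (v (p-1) * v p)
          + (-(h^2)/12) * (w (p+1) * v p) + (h^2/6) * (w p * v p)
          + (-(h^2)/12) * (w (p-1) * v p) + h^2 * (S p * v p) := by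
      intro p _
      linear_combination v p * hrel2 p
    rw [Finset.sum_mul, Finset.sum_congr rfl pt]
    simp only [Finset.sum_add_distrib, ← Finset.mul_sum]
    rw [sh_vv, sh_wv]
    rw [show ∑ p ∈ Finset.Icc (1:ℤ) (M:ℤ), v (p-1) * v p
          = ∑ p ∈ Finset.Icc (1:ℤ) (M:ℤ), v p * v (p-1) from
        Finset.sum_congr rfl (fun p _ => mul_comm _ _)]
    ring
  -- E2': sum of hrel2 * w
  have E2 : (∑ p ∈ Finset.Icc (1:ℤ) (M:ℤ), w p * w p) * h ^ 2
      = (∑ p ∈ Finset.Icc (1:ℤ) (M:ℤ), w (p-1) * v p)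
        - 2 * (∑ p ∈ Finset.Icc (1:ℤ) (M:ℤ), w p * v p)
        + (∑ p ∈ Finset.Icc (1:ℤ) (M:ℤ), w p * v (p-1))
        - h ^ 2 / 12 * (2 * (∑ p ∈ Finset.Icc (1:ℤ) (M:ℤ), w p * w (p-1))
            - 2 * (∑ p ∈ Finset.Icc (1:ℤ) (M:ℤ), w p * w p))
        + (∑ p ∈ Finset.Icc (1:ℤ) (M:ℤ), w p * S p) * h ^ 2 := by
    have pt : ∀ p ∈ Finset.Icc (1:ℤ) (M:ℤ), w p * w p * h ^ 2
        = (1:ℝ) * (v (p+1) * w p) + (-2:ℝ) * (v p * w p) + (1:ℝ) * (v (p-1) * w p)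
          + (-(h^2)/12) * (w (p+1) * w p) + (h^2/6) * (w p * w p)
          + (-(h^2)/12) * (w (p-1) * w p) + h^2 * (S p * w p) := by
      intro p _
      linear_combination w p * hrel2 p
    rw [Finset.sum_mul, Finset.sum_congr rfl pt]
    simp only [Finset.sum_add_distrib, ← Finset.mul_sum]
    rw [sh_vw, sh_ww]
    rw [show ∑ p ∈ Finset.Icc (1:ℤ) (M:ℤ), v p * w (p-1)
          = ∑ p ∈ Finset.Icc (1:ℤ) (M:ℤ), w (p-1) * v p from
        Finset.sum_congr rfl (fun p _ => mul_comm _ _)]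
    rw [show ∑ p ∈ Finset.Icc (1:ℤ) (M:ℤ), v p * w p
          = ∑ p ∈ Finset.Icc (1:ℤ) (M:ℤ), w p * v p from
        Finset.sum_congr rfl (fun p _ => mul_comm _ _)]
    rw [show ∑ p ∈ Finset.Icc (1:ℤ) (M:ℤ), v (p-1) * w p
          = ∑ p ∈ Finset.Icc (1:ℤ) (M:ℤ), w p * v (p-1) from
        Finset.sum_congr rfl (fun p _ => mul_comm _ _)]
    rw [show ∑ p ∈ Finset.Icc (1:ℤ) (M:ℤ), w (p-1) * w p
          = ∑ p ∈ Finset.Icc (1:ℤ) (M:ℤ), w p * w (p-1) from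
        Finset.sum_congr rfl (fun p _ => mul_comm _ _)]
    rw [show ∑ p ∈ Finset.Icc (1:ℤ) (M:ℤ), S p * w p
          = ∑ p ∈ Finset.Icc (1:ℤ) (M:ℤ), w p * S p from
        Finset.sum_congr rfl (fun p _ => mul_comm _ _)]
    ring
  -- seminorm expansions (multiplied by h²)
  have N1 : h ^ 2 * (∑ p ∈ Finset.Icc (1:ℤ) (M:ℤ), ((v p - v (p-1)) / h) ^ 2)
      = 2 * (∑ p ∈ Finset.Icc (1:ℤ) (M:ℤ), v p * v p)
        - 2 * (∑ p ∈ Finset.Icc (1:ℤ) (M:ℤ), v p * v (p-1)) := by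
    have pt : ∀ p ∈ Finset.Icc (1:ℤ) (M:ℤ), h ^ 2 * ((v p - v (p-1)) / h) ^ 2
        = (1:ℝ) * (v p * v p) + (-2:ℝ) * (v p * v (p-1)) + (1:ℝ) * (v (p-1) * v (p-1)) := by
      intro p _; field_simp; ring
    rw [Finset.mul_sum, Finset.sum_congr rfl pt]
    simp only [Finset.sum_add_distrib, ← Finset.mul_sum]
    rw [sh_vmm]; ring
  have N2 : h ^ 2 * (∑ p ∈ Finset.Icc (1:ℤ) (M:ℤ), ((w p - w (p-1)) / h) ^ 2)
      = 2 * (∑ p ∈ Finset.Icc (1:ℤ) (M:ℤ), w p * w p)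
        - 2 * (∑ p ∈ Finset.Icc (1:ℤ) (M:ℤ), w p * w (p-1)) := by
    have pt : ∀ p ∈ Finset.Icc (1:ℤ) (M:ℤ), h ^ 2 * ((w p - w (p-1)) / h) ^ 2
        = (1:ℝ) * (w p * w p) + (-2:ℝ) * (w p * w (p-1)) + (1:ℝ) * (w (p-1) * w (p-1)) := by
      intro p _; field_simp; ring
    rw [Finset.mul_sum, Finset.sum_congr rfl pt]
    simp only [Finset.sum_add_distrib, ← Finset.mul_sum]
    rw [sh_wmm]; ring
  -- rewrite squares of square roots
  have hnrm : (nrm M h w) ^ 2 = h * ∑ p ∈ Finset.Icc (1:ℤ) (M:ℤ), w p * w p := by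
    have : (0:ℝ) ≤ ip M h w w := by
      rw [ip]
      exact mul_nonneg hh.le (Finset.sum_nonneg fun p _ => mul_self_nonneg _)
    rw [nrm, Real.sq_sqrt this, ip]
  have hsn1 : (snorm1 M h v) ^ 2
      = h * ∑ p ∈ Finset.Icc (1:ℤ) (M:ℤ), ((v p - v (p-1)) / h) ^ 2 := by
    rw [snorm1, Real.sq_sqrt
      (mul_nonneg hh.le (Finset.sum_nonneg fun p _ => sq_nonneg _))]
  have hsn2 : (snorm1 M h w) ^ 2
      = h * ∑ p ∈ Finset.Icc (1:ℤ) (M:ℤ), ((w p - w (p-1)) / h) ^ 2 := by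
    rw [snorm1, Real.sq_sqrt
      (mul_nonneg hh.le (Finset.sum_nonneg fun p _ => sq_nonneg _))]
  rw [show ip M h w v = h * ∑ p ∈ Finset.Icc (1:ℤ) (M:ℤ), w p * v p from rfl,
      show ip M h w S = h * ∑ p ∈ Finset.Icc (1:ℤ) (M:ℤ), w p * S p from rfl,
      show ip M h S v = h * ∑ p ∈ Finset.Icc (1:ℤ) (M:ℤ), S p * v p from rfl,
      hnrm, hsn1, hsn2]
  apply mul_left_cancel₀ hne
  linear_combination E1 + h ^ 2 / 12 * E2 + N1 - h ^ 4 / 144 * N2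
end

section
/- Let v, w, S be periodic grid functions satisfying w_p = (δ_xx v)_p − (h²/12)(δ_xx w)_p + S_p for all p ∈ ℤ. Then ⟨w, v⟩ ≤ −|v|_1² − (h²/18)‖w‖² + (h²/12)⟨w, S⟩ + ⟨S, v⟩. -/
open Finset

lemma shift_sum_down (M : ℕ) (hM : 1 ≤ M) (f : ℤ → ℝ) (hf : ∀ p : ℤ, f (p + (M:ℤ)) = f p) :
    ∑ p ∈ Finset.Icc (1:ℤ) (M:ℤ), f (p - 1) = ∑ p ∈ Finset.Icc (1:ℤ) (M:ℤ), f p := by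
  have h2 : ∀ p : ℤ, (fun q => f (q - 1)) (p + (M:ℤ)) = (fun q => f (q - 1)) p := by
    intro p; simp only; rw [show p + (M:ℤ) - 1 = (p - 1) + (M:ℤ) by ring, hf]
  have := shift_sum M hM (fun q => f (q - 1)) h2
  simp only [add_sub_cancel_right] at this
  exact this.symm

lemma shift1 (M : ℕ) (hM : 1 ≤ M) (u z : ℤ → ℝ) (hu : Periodic M u) (hz : Periodic M z) :
    ∑ p ∈ Finset.Icc (1:ℤ) (M:ℤ), u (p+1) * z p
      = ∑ p ∈ Finset.Icc (1:ℤ) (M:ℤ), u p * z (p-1) := by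
  have hper : ∀ p : ℤ, (fun q => u q * z (q-1)) (p + (M:ℤ)) = (fun q => u q * z (q-1)) p := by
    intro p; simp only
    rw [hu p, show p + (M:ℤ) - 1 = (p-1) + (M:ℤ) by ring, hz (p-1)]
  have := shift_sum M hM (fun q => u q * z (q-1)) hper
  simpa using this

lemma shift2 (M : ℕ) (hM : 1 ≤ M) (u z : ℤ → ℝ) (hu : Periodic M u) (hz : Periodic M z) :
    ∑ p ∈ Finset.Icc (1:ℤ) (M:ℤ), u (p-1) * z p
      = ∑ p ∈ Finset.Icc (1:ℤ) (M:ℤ), u p * z (p+1) := by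
  have hper : ∀ p : ℤ, (fun q => u q * z (q+1)) (p + (M:ℤ)) = (fun q => u q * z (q+1)) p := by
    intro p; simp only
    rw [hu p, show p + (M:ℤ) + 1 = (p+1) + (M:ℤ) by ring, hz (p+1)]
  have := shift_sum_down M hM (fun q => u q * z (q+1)) hper
  simpa using this

lemma dxx_expand (M : ℕ) (h : ℝ) (u z : ℤ → ℝ) :
    ∑ p ∈ Finset.Icc (1:ℤ) (M:ℤ), Dxx h u p * z p
      = (∑ p ∈ Finset.Icc (1:ℤ) (M:ℤ), u (p+1) * z p) / h^2
        - 2 * ((∑ p ∈ Finset.Icc (1:ℤ) (M:ℤ), u p * z p) / h^2)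
        + (∑ p ∈ Finset.Icc (1:ℤ) (M:ℤ), u (p-1) * z p) / h^2 := by
  rw [Finset.sum_div, Finset.sum_div, Finset.sum_div, Finset.mul_sum,
      ← Finset.sum_sub_distrib, ← Finset.sum_add_distrib]
  exact Finset.sum_congr rfl fun p _ => by simp only [Dxx]; ring

lemma sbp_sym (M : ℕ) (hM : 1 ≤ M) (h : ℝ) (u z : ℤ → ℝ)
    (hu : Periodic M u) (hz : Periodic M z) :
    ∑ p ∈ Finset.Icc (1:ℤ) (M:ℤ), Dxx h u p * z p
      = ∑ p ∈ Finset.Icc (1:ℤ) (M:ℤ), u p * Dxx h z p := by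
  have hL := dxx_expand M h u z
  have hR : ∑ p ∈ Finset.Icc (1:ℤ) (M:ℤ), u p * Dxx h z p
      = ∑ p ∈ Finset.Icc (1:ℤ) (M:ℤ), Dxx h z p * u p := by
    exact Finset.sum_congr rfl fun p _ => mul_comm _ _
  rw [hL, hR, dxx_expand M h z u, shift1 M hM z u hz hu, shift2 M hM z u hz hu]
  have c1 : ∑ p ∈ Finset.Icc (1:ℤ) (M:ℤ), z p * u p
      = ∑ p ∈ Finset.Icc (1:ℤ) (M:ℤ), u p * z p :=
    Finset.sum_congr rfl fun p _ => mul_comm _ _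
  have c2 : ∑ p ∈ Finset.Icc (1:ℤ) (M:ℤ), z p * u (p-1)
      = ∑ p ∈ Finset.Icc (1:ℤ) (M:ℤ), u (p-1) * z p :=
    Finset.sum_congr rfl fun p _ => mul_comm _ _
  have c3 : ∑ p ∈ Finset.Icc (1:ℤ) (M:ℤ), z p * u (p+1)
      = ∑ p ∈ Finset.Icc (1:ℤ) (M:ℤ), u (p+1) * z p :=
    Finset.sum_congr rfl fun p _ => mul_comm _ _
  rw [c1, c2, c3]
  ring

lemma sbp_self (M : ℕ) (hM : 1 ≤ M) (h : ℝ) (u : ℤ → ℝ) (hu : Periodic M u) :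
    ∑ p ∈ Finset.Icc (1:ℤ) (M:ℤ), Dxx h u p * u p
      = -(1/h^2) * ∑ p ∈ Finset.Icc (1:ℤ) (M:ℤ), (u p - u (p-1))^2 := by
  have hL := dxx_expand M h u u
  have s1 := shift1 M hM u u hu hu
  have c1 : ∑ p ∈ Finset.Icc (1:ℤ) (M:ℤ), u (p-1) * u p
      = ∑ p ∈ Finset.Icc (1:ℤ) (M:ℤ), u p * u (p-1) :=
    Finset.sum_congr rfl fun p _ => mul_comm _ _
  have hsq : ∑ p ∈ Finset.Icc (1:ℤ) (M:ℤ), u (p-1) * u (p-1)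
      = ∑ p ∈ Finset.Icc (1:ℤ) (M:ℤ), u p * u p := by
    have hper : ∀ p : ℤ, (fun q => u q * u q) (p + (M:ℤ)) = (fun q => u q * u q) p := by
      intro p; simp only [hu p]
    exact shift_sum_down M hM (fun q => u q * u q) hper
  have hexp : ∑ p ∈ Finset.Icc (1:ℤ) (M:ℤ), (u p - u (p-1))^2
      = ∑ p ∈ Finset.Icc (1:ℤ) (M:ℤ), u p * u p
        - 2 * ∑ p ∈ Finset.Icc (1:ℤ) (M:ℤ), u p * u (p-1)
        + ∑ p ∈ Finset.Icc (1:ℤ) (M:ℤ), u (p-1) * u (p-1) := by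
    rw [Finset.mul_sum, ← Finset.sum_sub_distrib, ← Finset.sum_add_distrib]
    exact Finset.sum_congr rfl fun p _ => by ring
  rw [hL, s1, c1, hexp, hsq]
  ring

/-- if `w = δ_xx v − (h²/12) δ_xx w + S` then
`⟨w,v⟩ ≤ −|v|₁² − (h²/18)‖w‖² + (h²/12)⟨w,S⟩ + ⟨S,v⟩`. -/
theorem stmt_9 (M : ℕ) (hM : 3 ≤ M) (h : ℝ) (hh : 0 < h) (L : ℝ) (hL : L = M * h)
    (v w S : ℤ → ℝ) (hv : Periodic M v) (hw : Periodic M w) (hS : Periodic M S)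
    (hrel : ∀ p : ℤ, w p = Dxx h v p - h ^ 2 / 12 * Dxx h w p + S p) :
    ip M h w v
      ≤ -(snorm1 M h v) ^ 2 - h ^ 2 / 18 * (nrm M h w) ^ 2
        + h ^ 2 / 12 * ip M h w S + ip M h S v := by
  have hM1 : 1 ≤ M := by omega
  have h0 : h ≠ 0 := ne_of_gt hh
  have sym := sbp_sym M hM1 h w v hw hv
  have selfv := sbp_self M hM1 h v hv
  have selfw := sbp_self M hM1 h w hw
  have step1 : ∑ p ∈ Finset.Icc (1:ℤ) (M:ℤ), w p * v p
      = (∑ p ∈ Finset.Icc (1:ℤ) (M:ℤ), Dxx h v p * v p)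
        - h^2/12 * (∑ p ∈ Finset.Icc (1:ℤ) (M:ℤ), Dxx h w p * v p)
        + (∑ p ∈ Finset.Icc (1:ℤ) (M:ℤ), S p * v p) := by
    rw [Finset.mul_sum, ← Finset.sum_sub_distrib, ← Finset.sum_add_distrib]
    exact Finset.sum_congr rfl fun p _ => by rw [hrel p]; ring
  have step2 : ∑ p ∈ Finset.Icc (1:ℤ) (M:ℤ), w p * Dxx h v p
      = (∑ p ∈ Finset.Icc (1:ℤ) (M:ℤ), w p * w p) + h^2/12 * (∑ p ∈ Finset.Icc (1:ℤ) (M:ℤ), Dxx h w p * w p) - (∑ p ∈ Finset.Icc (1:ℤ) (M:ℤ), w p * S p) := by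
    rw [Finset.mul_sum, ← Finset.sum_add_distrib, ← Finset.sum_sub_distrib]
    refine Finset.sum_congr rfl fun p _ => ?_
    have hD : Dxx h v p = w p + h^2/12 * Dxx h w p - S p := by have := hrel p; linarith
    rw [hD]; ring
  have hsqw : ∑ p ∈ Finset.Icc (1:ℤ) (M:ℤ), w (p-1) * w (p-1) = ∑ p ∈ Finset.Icc (1:ℤ) (M:ℤ), w p * w p := by
    have hper : ∀ p : ℤ, (fun q => w q * w q) (p + (M:ℤ)) = (fun q => w q * w q) p := by
      intro p; simp only [hw p]
    exact shift_sum_down M hM1 (fun q => w q * w q) hper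
  have hQw : (∑ p ∈ Finset.Icc (1:ℤ) (M:ℤ), (w p - w (p-1))^2) ≤ 4 * (∑ p ∈ Finset.Icc (1:ℤ) (M:ℤ), w p * w p) := by
    have hb : (∑ p ∈ Finset.Icc (1:ℤ) (M:ℤ), (w p - w (p-1))^2) ≤ ∑ p ∈ Finset.Icc (1:ℤ) (M:ℤ), (2*(w p * w p) + 2*(w (p-1) * w (p-1))) := by
      refine Finset.sum_le_sum fun p _ => ?_
      nlinarith [sq_nonneg (w p + w (p-1))]
    rw [Finset.sum_add_distrib, ← Finset.mul_sum, ← Finset.mul_sum, hsqw] at hb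
    linarith
  have hTww0 : 0 ≤ ∑ p ∈ Finset.Icc (1:ℤ) (M:ℤ), w p * w p := Finset.sum_nonneg fun p _ => mul_self_nonneg _
  have hnrm : (nrm M h w)^2 = h * (∑ p ∈ Finset.Icc (1:ℤ) (M:ℤ), w p * w p) := by
    rw [nrm]
    rw [Real.sq_sqrt (by exact mul_nonneg hh.le hTww0 : (0:ℝ) ≤ ip M h w w)]
    rfl
  have hsn : (snorm1 M h v)^2 = (∑ p ∈ Finset.Icc (1:ℤ) (M:ℤ), (v p - v (p-1))^2) / h := by
    rw [snorm1]
    have e : ∑ p ∈ Finset.Icc (1:ℤ) (M:ℤ), ((v p - v (p-1))/h)^2 = (∑ p ∈ Finset.Icc (1:ℤ) (M:ℤ), (v p - v (p-1))^2)/h^2 := by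
      rw [Finset.sum_div]; exact Finset.sum_congr rfl fun p _ => div_pow _ _ _
    rw [Real.sq_sqrt (by positivity), e]
    field_simp
  have E : ∑ p ∈ Finset.Icc (1:ℤ) (M:ℤ), w p * v p
      = -(1/h^2)*(∑ p ∈ Finset.Icc (1:ℤ) (M:ℤ), (v p - v (p-1))^2)
        - h^2/12*((∑ p ∈ Finset.Icc (1:ℤ) (M:ℤ), w p * w p) + h^2/12 * (-(1/h^2)*(∑ p ∈ Finset.Icc (1:ℤ) (M:ℤ), (w p - w (p-1))^2)) - (∑ p ∈ Finset.Icc (1:ℤ) (M:ℤ), w p * S p))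
        + (∑ p ∈ Finset.Icc (1:ℤ) (M:ℤ), S p * v p) := by
    rw [step1, selfv, sym, step2, selfw]
  have E' : h * (∑ p ∈ Finset.Icc (1:ℤ) (M:ℤ), w p * v p)
      = -((∑ p ∈ Finset.Icc (1:ℤ) (M:ℤ), (v p - v (p-1))^2)/h) - h^3/12*(∑ p ∈ Finset.Icc (1:ℤ) (M:ℤ), w p * w p) + h^3/144*(∑ p ∈ Finset.Icc (1:ℤ) (M:ℤ), (w p - w (p-1))^2) + h^3/12*(∑ p ∈ Finset.Icc (1:ℤ) (M:ℤ), w p * S p) + h*(∑ p ∈ Finset.Icc (1:ℤ) (M:ℤ), S p * v p) := by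
    rw [E]; field_simp; ring
  have goalL : ip M h w v = h * (∑ p ∈ Finset.Icc (1:ℤ) (M:ℤ), w p * v p) := rfl
  have gS : ip M h w S = h * (∑ p ∈ Finset.Icc (1:ℤ) (M:ℤ), w p * S p) := rfl
  have gSv : ip M h S v = h * (∑ p ∈ Finset.Icc (1:ℤ) (M:ℤ), S p * v p) := rfl
  rw [goalL, gS, gSv, hnrm, hsn, E']
  have h3 : (0:ℝ) < h^3 := by positivity
  nlinarith [mul_le_mul_of_nonneg_left hQw h3.le]
end

section
/- Let v, w, S be periodic grid functions satisfying w_p = (δ_xx v)_p − (h²/12)(δ_xx w)_p + S_p for all p ∈ ℤ. Then ⟨Δ_x w, v⟩ = (h²/12)⟨Δ_x w, S⟩ + ⟨Δ_x S, v⟩. -/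
/-!
Summation by parts on the periodic grid: `Δ_x` is skew-adjoint and `δ_xx` self-adjoint for
`⟨·,·⟩`, and the two commute. Substituting `S = w − δ_xx v + (h²/12) δ_xx w`, the pairings
`⟨Δ_x w, w⟩`, `⟨Δ_x w, δ_xx w⟩` and `⟨Δ_x δ_xx v, v⟩` vanish by skew-adjointness, while
`⟨Δ_x δ_xx w, v⟩ = ⟨Δ_x w, δ_xx v⟩` cancels the remaining term.
-/

open Finset

theorem sum_Icc_sub_telescope {β : Type*} [AddCommGroup β] (g : ℤ → β) (n : ℕ) :
    ∑ p ∈ Icc (1 : ℤ) n, (g (p + 1) - g p) = g (n + 1) - g 1 := by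
  induction n with
  | zero => simp
  | succ n ih =>
    rw [Nat.cast_succ, ← Order.succ_eq_add_one (n : ℤ),
      ← insert_Icc_right_eq_Icc_succ (by rw [Order.succ_eq_add_one]; omega),
      sum_insert (by simp), ih, Order.succ_eq_add_one]
    abel

section GridFunctions

variable {M : ℕ} {h : ℝ} {a b f : ℤ → ℝ}

theorem Periodic.sum_Icc_sub_eq_zero (hf : Periodic M f) :
    ∑ p ∈ Icc (1 : ℤ) M, (f (p + 1) - f p) = 0 := by
  rw [sum_Icc_sub_telescope, add_comm, hf, sub_self]

theorem periodic_Dx (hf : Periodic M f) : Periodic M (Dx h f) := fun p => by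
  simp only [Dx]
  rw [add_right_comm, add_sub_right_comm, hf, hf]

theorem periodic_Dxx (hf : Periodic M f) : Periodic M (Dxx h f) := fun p => by
  simp only [Dxx]
  rw [add_right_comm, add_sub_right_comm, hf, hf, hf]

theorem Dx_add (a b : ℤ → ℝ) : Dx h (a + b) = Dx h a + Dx h b := by
  funext p; simp only [Dx, Pi.add_apply]; ring

theorem Dx_sub (a b : ℤ → ℝ) : Dx h (a - b) = Dx h a - Dx h b := by
  funext p; simp only [Dx, Pi.sub_apply]; ring

theorem Dx_smul (c : ℝ) (a : ℤ → ℝ) : Dx h (c • a) = c • Dx h a := by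
  funext p; simp only [Dx, Pi.smul_apply, smul_eq_mul]; ring

theorem Dx_Dxx_comm (f : ℤ → ℝ) : Dx h (Dxx h f) = Dxx h (Dx h f) := by
  funext p; simp only [Dx, Dxx, add_sub_cancel_right, sub_add_cancel]; ring

theorem ip_comm (a b : ℤ → ℝ) : ip M h a b = ip M h b a := by
  simp only [ip, mul_comm (a _)]

theorem ip_add_left (a b c : ℤ → ℝ) : ip M h (a + b) c = ip M h a c + ip M h b c := by
  simp only [ip, Pi.add_apply, add_mul, sum_add_distrib, mul_add]

theorem ip_sub_left (a b c : ℤ → ℝ) : ip M h (a - b) c = ip M h a c - ip M h b c := by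
  simp only [ip, Pi.sub_apply, sub_mul, sum_sub_distrib, mul_sub]

theorem ip_smul_left (r : ℝ) (a b : ℤ → ℝ) : ip M h (r • a) b = r * ip M h a b := by
  simp only [ip, Pi.smul_apply, smul_eq_mul, mul_assoc, ← mul_sum, mul_left_comm h]

theorem ip_Dx_left (ha : Periodic M a) (hb : Periodic M b) :
    ip M h (Dx h a) b = -ip M h a (Dx h b) := by
  set g : ℤ → ℝ := fun p => a p * b (p - 1)
  set k : ℤ → ℝ := fun p => a (p - 1) * b p
  have hg : Periodic M g := Function.Periodic.mul ha (Function.Periodic.sub_const hb 1)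
  have hk : Periodic M k := Function.Periodic.mul (Function.Periodic.sub_const ha 1) hb
  have key : ∀ p, Dx h a p * b p + a p * Dx h b p
      = ((g (p + 1) - g p) + (k (p + 1) - k p)) / (2 * h) := fun p => by
    simp only [g, k, Dx, add_sub_cancel_right]; ring
  rw [eq_neg_iff_add_eq_zero, ip, ip, ← mul_add, ← sum_add_distrib,
    sum_congr rfl fun p _ => key p, ← sum_div, sum_add_distrib, hg.sum_Icc_sub_eq_zero, hk.sum_Icc_sub_eq_zero]
  simp

theorem ip_Dxx_left (ha : Periodic M a) (hb : Periodic M b) :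
    ip M h (Dxx h a) b = ip M h a (Dxx h b) := by
  set g : ℤ → ℝ := fun p => a p * b (p - 1) - a (p - 1) * b p
  have hg : Periodic M g := fun p => by
    simp only [g, add_sub_right_comm p, ha p, hb p, ha (p - 1), hb (p - 1)]
  have key : ∀ p, Dxx h a p * b p - a p * Dxx h b p = (g (p + 1) - g p) / h ^ 2 := fun p => by
    simp only [g, Dxx, add_sub_cancel_right]; ring
  rw [← sub_eq_zero, ip, ip, ← mul_sub, ← sum_sub_distrib, sum_congr rfl fun p _ => key p,
    ← sum_div, hg.sum_Icc_sub_eq_zero]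
  simp

theorem ip_Dx_self (ha : Periodic M a) : ip M h (Dx h a) a = 0 := by
  have skew : ip M h (Dx h a) a = -ip M h a (Dx h a) := ip_Dx_left ha ha
  rw [ip_comm a] at skew
  linarith

theorem ip_Dx_Dxx_self (ha : Periodic M a) : ip M h (Dx h a) (Dxx h a) = 0 := by
  have skew : ip M h (Dx h a) (Dxx h a) = -ip M h a (Dx h (Dxx h a)) :=
    ip_Dx_left ha (periodic_Dxx ha)
  rw [Dx_Dxx_comm, ← ip_Dxx_left ha (periodic_Dx ha), ip_comm (Dxx h a)] at skew
  linarith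

theorem ip_Dx_Dxx_left (ha : Periodic M a) (hb : Periodic M b) :
    ip M h (Dx h (Dxx h a)) b = ip M h (Dx h a) (Dxx h b) := by
  rw [Dx_Dxx_comm, ip_Dxx_left (periodic_Dx ha) hb]

end GridFunctions

theorem stmt_10_general (M : ℕ) (h : ℝ)
    (v w S : ℤ → ℝ) (hv : Periodic M v) (hw : Periodic M w)
    (hrel : ∀ p : ℤ, w p = Dxx h v p - h ^ 2 / 12 * Dxx h w p + S p) :
    ip M h (Dx h w) v = h ^ 2 / 12 * ip M h (Dx h w) S + ip M h (Dx h S) v := by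
  obtain rfl : S = w - Dxx h v + (h ^ 2 / 12) • Dxx h w := funext fun p => by
    simp only [Pi.add_apply, Pi.sub_apply, Pi.smul_apply, smul_eq_mul]
    linarith [hrel p]
  have hw_skew : ip M h w (Dx h w) = 0 := by rw [ip_comm, ip_Dx_self hw]
  have hDxxw_skew : ip M h (Dxx h w) (Dx h w) = 0 := by rw [ip_comm, ip_Dx_Dxx_self hw]
  have hDxDxxv : ip M h (Dx h (Dxx h v)) v = 0 := by rw [ip_Dx_Dxx_left hv hv, ip_Dx_Dxx_self hv]
  have hDxDxxw : ip M h (Dx h (Dxx h w)) v = ip M h (Dxx h v) (Dx h w) := by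
    rw [ip_Dx_Dxx_left hw hv, ip_comm]
  rw [ip_comm (Dx h w) (w - _ + _)]
  simp only [Dx_add, Dx_sub, Dx_smul, ip_add_left, ip_sub_left, ip_smul_left]
  rw [hw_skew, hDxxw_skew, hDxDxxv, hDxDxxw]
  ring

/-- if `w = δ_xx v − (h²/12) δ_xx w + S` then
`⟨Δ_x w, v⟩ = (h²/12)⟨Δ_x w, S⟩ + ⟨Δ_x S, v⟩`. -/
theorem stmt_10 (M : ℕ) (hM : 3 ≤ M) (h : ℝ) (hh : 0 < h) (L : ℝ) (hL : L = M * h)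
    (v w S : ℤ → ℝ) (hv : Periodic M v) (hw : Periodic M w) (hS : Periodic M S)
    (hrel : ∀ p : ℤ, w p = Dxx h v p - h ^ 2 / 12 * Dxx h w p + S p) :
    ip M h (Dx h w) v = h ^ 2 / 12 * ip M h (Dx h w) S + ip M h (Dx h S) v :=
  stmt_10_general M h v w S hv hw hrel
end

section
/- Let τ > 0 and let v⁰, v¹, w⁰, w¹, S⁰, S¹ be periodic grid functions satisfying w^i_p = (δ_xx v^i)_p − (h²/12)(δ_xx w^i)_p + S^i_p for i ∈ {0,1} and all p ∈ ℤ. Write x̄ = (x⁰ + x¹)/2 and δ_t x = (x¹ − x⁰)/τ for x ∈ {v, w, S}. Then ⟨w̄, δ_t v⟩ = −(1/(2τ))·[ (|v¹|_1² − |v⁰|_1²) + (h²/12)(‖w¹‖² − ‖w⁰‖²) − (h⁴/144)(|w¹|_1² − |w⁰|_1²) ] + (h²/12)⟨w̄, δ_t S⟩ + ⟨S̄, δ_t v⟩. -/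
open Finset

lemma shift1_s12 (M : ℕ) (hM : 1 ≤ M) (f : ℤ → ℝ) (hf : ∀ p : ℤ, f (p + (M : ℤ)) = f p) :
    ∑ p ∈ Icc (1 : ℤ) (M : ℤ), f (p + 1) = ∑ p ∈ Icc (1 : ℤ) (M : ℤ), f p := by
  have e1 : ∑ p ∈ Icc (1 : ℤ) (M : ℤ), f (p + 1) = ∑ p ∈ Icc (2 : ℤ) ((M : ℤ) + 1), f p := by
    rw [show Icc (2 : ℤ) ((M : ℤ) + 1) = (Icc (1 : ℤ) (M : ℤ)).map (addRightEmbedding 1) by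
      rw [Finset.map_add_right_Icc]; norm_num]
    rw [Finset.sum_map]; rfl
  have e2 : Icc (2 : ℤ) ((M : ℤ) + 1) = insert ((M : ℤ) + 1) (Icc (2 : ℤ) (M : ℤ)) := by
    ext x; simp only [mem_Icc, mem_insert]; omega
  have e3 : Icc (1 : ℤ) (M : ℤ) = insert (1 : ℤ) (Icc (2 : ℤ) (M : ℤ)) := by
    ext x; simp only [mem_Icc, mem_insert]
    have : (1:ℤ) ≤ (M:ℤ) := by exact_mod_cast hM
    omega
  rw [e1, e2, Finset.sum_insert (by simp only [mem_Icc]; omega)]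
  conv_rhs => rw [e3, Finset.sum_insert (by simp only [mem_Icc]; omega)]
  rw [show f ((M : ℤ) + 1) = f 1 by rw [add_comm]; exact hf 1]

lemma shiftd (M : ℕ) (hM : 1 ≤ M) (f : ℤ → ℝ) (hf : ∀ p : ℤ, f (p + (M : ℤ)) = f p) :
    ∑ p ∈ Icc (1 : ℤ) (M : ℤ), f (p - 1) = ∑ p ∈ Icc (1 : ℤ) (M : ℤ), f p := by
  have := shift1_s12 M hM (fun p => f (p - 1)) (fun p => by
    show f (p + (M : ℤ) - 1) = f (p - 1)
    rw [show p + (M : ℤ) - 1 = (p - 1) + M by ring, hf])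
  simp only [add_sub_cancel_right] at this
  exact this.symm

lemma abel_sum (M : ℕ) (hM : 1 ≤ M) (h : ℝ) (u v : ℤ → ℝ)
    (hu : ∀ p : ℤ, u (p + (M : ℤ)) = u p) (hv : ∀ p : ℤ, v (p + (M : ℤ)) = v p) :
    ∑ p ∈ Icc (1 : ℤ) (M : ℤ), Dxx h u p * v p
      = -∑ p ∈ Icc (1 : ℤ) (M : ℤ), ((u p - u (p - 1)) / h) * ((v p - v (p - 1)) / h) := by
  set F : ℤ → ℝ := fun p => (u (p + 1) - u p) * v p / h ^ 2 with hF
  have hFper : ∀ p : ℤ, F (p + (M : ℤ)) = F p := by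
    intro p
    simp only [hF]
    rw [show p + (M : ℤ) + 1 = (p + 1) + M by ring, hu, hu, hv]
  have tel : ∑ p ∈ Icc (1 : ℤ) (M : ℤ), (F p - F (p - 1)) = 0 := by
    rw [Finset.sum_sub_distrib, shiftd M hM F hFper, sub_self]
  have key : ∀ p : ℤ,
      Dxx h u p * v p + ((u p - u (p - 1)) / h) * ((v p - v (p - 1)) / h) = F p - F (p - 1) := by
    intro p
    simp only [hF, Dxx, sub_add_cancel]
    ring
  have h2 : ∑ p ∈ Icc (1 : ℤ) (M : ℤ),
      (Dxx h u p * v p + ((u p - u (p - 1)) / h) * ((v p - v (p - 1)) / h)) = 0 := by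
    rw [Finset.sum_congr rfl (fun p _ => key p)]; exact tel
  rw [Finset.sum_add_distrib] at h2
  linarith

set_option maxHeartbeats 1000000

/-- discrete energy identity `⟨w̄, δ_t v⟩ = …` for the compact relation. -/
theorem stmt_12 (M : ℕ) (hM : 3 ≤ M) (h : ℝ) (hh : 0 < h) (L : ℝ) (hL : L = M * h)
    (τ : ℝ) (hτ : 0 < τ)
    (v0 v1 w0 w1 S0 S1 : ℤ → ℝ)
    (hv0 : Periodic M v0) (hv1 : Periodic M v1)
    (hw0 : Periodic M w0) (hw1 : Periodic M w1)
    (hS0 : Periodic M S0) (hS1 : Periodic M S1)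
    (hrel0 : ∀ p : ℤ, w0 p = Dxx h v0 p - h ^ 2 / 12 * Dxx h w0 p + S0 p)
    (hrel1 : ∀ p : ℤ, w1 p = Dxx h v1 p - h ^ 2 / 12 * Dxx h w1 p + S1 p) :
    ip M h (fun p => (w0 p + w1 p) / 2) (fun p => (v1 p - v0 p) / τ)
      = -(1 / (2 * τ)) *
          (((snorm1 M h v1) ^ 2 - (snorm1 M h v0) ^ 2)
            + h ^ 2 / 12 * ((nrm M h w1) ^ 2 - (nrm M h w0) ^ 2)
            - h ^ 4 / 144 * ((snorm1 M h w1) ^ 2 - (snorm1 M h w0) ^ 2))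
        + h ^ 2 / 12 *
            ip M h (fun p => (w0 p + w1 p) / 2) (fun p => (S1 p - S0 p) / τ)
        + ip M h (fun p => (S0 p + S1 p) / 2) (fun p => (v1 p - v0 p) / τ) := by
  have hM1 : 1 ≤ M := by omega
  set wb : ℤ → ℝ := fun p => (w0 p + w1 p) / 2 with hwb
  set dv : ℤ → ℝ := fun p => (v1 p - v0 p) / τ with hdv
  set dS : ℤ → ℝ := fun p => (S1 p - S0 p) / τ with hdS
  set Sb : ℤ → ℝ := fun p => (S0 p + S1 p) / 2 with hSb
  set vb : ℤ → ℝ := fun p => (v0 p + v1 p) / 2 with hvb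
  set dw : ℤ → ℝ := fun p => (w1 p - w0 p) / τ with hdw
  have pwb : ∀ p : ℤ, wb (p + (M : ℤ)) = wb p := fun p => by
    simp only [hwb]; rw [hw0 p, hw1 p]
  have pdv : ∀ p : ℤ, dv (p + (M : ℤ)) = dv p := fun p => by
    simp only [hdv]; rw [hv0 p, hv1 p]
  have pvb : ∀ p : ℤ, vb (p + (M : ℤ)) = vb p := fun p => by
    simp only [hvb]; rw [hv0 p, hv1 p]
  have pdw : ∀ p : ℤ, dw (p + (M : ℤ)) = dw p := fun p => by
    simp only [hdw]; rw [hw0 p, hw1 p]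
  have ptw1 : ∀ p : ℤ, wb p = Dxx h vb p + (-(h ^ 2 / 12)) * Dxx h wb p + Sb p := by
    intro p
    have h0 := hrel0 p; have h1 := hrel1 p
    simp only [Dxx] at h0 h1
    simp only [hwb, hvb, hSb, Dxx]
    linear_combination h0 / 2 + h1 / 2
  have ptw2 : ∀ p : ℤ, Dxx h dv p = dw p + (h ^ 2 / 12) * Dxx h dw p + (-1) * dS p := by
    intro p
    have h0 := hrel0 p; have h1 := hrel1 p
    simp only [Dxx] at h0 h1
    simp only [hdv, hdw, hdS, Dxx]
    linear_combination (1 / τ) * h0 - (1 / τ) * h1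
  have ab1 := abel_sum M hM1 h vb dv pvb pdv
  have ab2 := abel_sum M hM1 h wb dv pwb pdv
  have ab3 := abel_sum M hM1 h dv wb pdv pwb
  have ab4 := abel_sum M hM1 h dw wb pdw pwb
  have sym : ∑ p ∈ Icc (1 : ℤ) (M : ℤ), Dxx h wb p * dv p
      = ∑ p ∈ Icc (1 : ℤ) (M : ℤ), Dxx h dv p * wb p := by
    rw [ab2, ab3]
    congr 1
    exact Finset.sum_congr rfl fun p _ => by ring
  have s0 : ∑ p ∈ Icc (1 : ℤ) (M : ℤ), wb p * dv p
      = ∑ p ∈ Icc (1 : ℤ) (M : ℤ), Dxx h vb p * dv p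
        + (-(h ^ 2 / 12)) * ∑ p ∈ Icc (1 : ℤ) (M : ℤ), Dxx h wb p * dv p
        + ∑ p ∈ Icc (1 : ℤ) (M : ℤ), Sb p * dv p := by
    simp only [Finset.mul_sum]
    rw [← Finset.sum_add_distrib, ← Finset.sum_add_distrib]
    exact Finset.sum_congr rfl fun p _ => by linear_combination dv p * ptw1 p
  have s1 : ∑ p ∈ Icc (1 : ℤ) (M : ℤ), Dxx h dv p * wb p
      = ∑ p ∈ Icc (1 : ℤ) (M : ℤ), dw p * wb p
        + (h ^ 2 / 12) * ∑ p ∈ Icc (1 : ℤ) (M : ℤ), Dxx h dw p * wb p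
        + (-1) * ∑ p ∈ Icc (1 : ℤ) (M : ℤ), dS p * wb p := by
    simp only [Finset.mul_sum]
    rw [← Finset.sum_add_distrib, ← Finset.sum_add_distrib]
    exact Finset.sum_congr rfl fun p _ => by linear_combination wb p * ptw2 p
  have q1 : ∑ p ∈ Icc (1 : ℤ) (M : ℤ), ((vb p - vb (p - 1)) / h) * ((dv p - dv (p - 1)) / h)
      = (1 / (2 * τ)) * (∑ p ∈ Icc (1 : ℤ) (M : ℤ), ((v1 p - v1 (p - 1)) / h) ^ 2
          - ∑ p ∈ Icc (1 : ℤ) (M : ℤ), ((v0 p - v0 (p - 1)) / h) ^ 2) := by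
    rw [← Finset.sum_sub_distrib, Finset.mul_sum]
    exact Finset.sum_congr rfl fun p _ => by simp only [hvb, hdv]; ring
  have q2 : ∑ p ∈ Icc (1 : ℤ) (M : ℤ), dw p * wb p
      = (1 / (2 * τ)) * (∑ p ∈ Icc (1 : ℤ) (M : ℤ), w1 p * w1 p
          - ∑ p ∈ Icc (1 : ℤ) (M : ℤ), w0 p * w0 p) := by
    rw [← Finset.sum_sub_distrib, Finset.mul_sum]
    exact Finset.sum_congr rfl fun p _ => by simp only [hwb, hdw]; ring
  have q3 : ∑ p ∈ Icc (1 : ℤ) (M : ℤ), ((dw p - dw (p - 1)) / h) * ((wb p - wb (p - 1)) / h)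
      = (1 / (2 * τ)) * (∑ p ∈ Icc (1 : ℤ) (M : ℤ), ((w1 p - w1 (p - 1)) / h) ^ 2
          - ∑ p ∈ Icc (1 : ℤ) (M : ℤ), ((w0 p - w0 (p - 1)) / h) ^ 2) := by
    rw [← Finset.sum_sub_distrib, Finset.mul_sum]
    exact Finset.sum_congr rfl fun p _ => by simp only [hwb, hdw]; ring
  have comm1 : ∑ p ∈ Icc (1 : ℤ) (M : ℤ), dS p * wb p
      = ∑ p ∈ Icc (1 : ℤ) (M : ℤ), wb p * dS p :=
    Finset.sum_congr rfl fun p _ => mul_comm _ _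
  have sqv1 : (snorm1 M h v1) ^ 2
      = h * ∑ p ∈ Icc (1 : ℤ) (M : ℤ), ((v1 p - v1 (p - 1)) / h) ^ 2 :=
    Real.sq_sqrt (by positivity)
  have sqv0 : (snorm1 M h v0) ^ 2
      = h * ∑ p ∈ Icc (1 : ℤ) (M : ℤ), ((v0 p - v0 (p - 1)) / h) ^ 2 :=
    Real.sq_sqrt (by positivity)
  have sqw1 : (snorm1 M h w1) ^ 2
      = h * ∑ p ∈ Icc (1 : ℤ) (M : ℤ), ((w1 p - w1 (p - 1)) / h) ^ 2 :=
    Real.sq_sqrt (by positivity)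
  have sqw0 : (snorm1 M h w0) ^ 2
      = h * ∑ p ∈ Icc (1 : ℤ) (M : ℤ), ((w0 p - w0 (p - 1)) / h) ^ 2 :=
    Real.sq_sqrt (by positivity)
  have ipn : ∀ u : ℤ → ℝ, (0:ℝ) ≤ ip M h u u := fun u =>
    mul_nonneg hh.le (Finset.sum_nonneg fun i _ => mul_self_nonneg _)
  have nw1 : (nrm M h w1) ^ 2 = h * ∑ p ∈ Icc (1 : ℤ) (M : ℤ), w1 p * w1 p := by
    rw [nrm, Real.sq_sqrt (ipn w1), ip]
  have nw0 : (nrm M h w0) ^ 2 = h * ∑ p ∈ Icc (1 : ℤ) (M : ℤ), w0 p * w0 p := by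
    rw [nrm, Real.sq_sqrt (ipn w0), ip]
  simp only [ip]
  rw [sqv1, sqv0, sqw1, sqw0, nw1, nw0, s0, ab1, q1, sym, s1, ab4, q3, q2, comm1]
  ring
end

section
/- Let τ > 0 and let v⁰, v¹, w⁰, w¹, S⁰, S¹ be periodic grid functions satisfying w^i_p = (δ_xx v^i)_p − (h²/12)(δ_xx w^i)_p + S^i_p for i ∈ {0,1} and all p ∈ ℤ. Write x̄ = (x⁰ + x¹)/2 and δ_t x = (x¹ − x⁰)/τ for x ∈ {v, w, S}. Then ⟨δ_t w, v̄⟩ = −(1/(2τ))·[ (|v¹|_1² − |v⁰|_1²) + (h²/12)(‖w¹‖² − ‖w⁰‖²) − (h⁴/144)(|w¹|_1² − |w⁰|_1²) ] + (h²/12)⟨δ_t w, S̄⟩ + ⟨δ_t S, v̄⟩. -/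
open Finset

/-! ### Auxiliary lemmas -/

lemma shift_up_aux (M : ℕ) (hM : 1 ≤ M) (g : ℤ → ℝ) (hg : ∀ p : ℤ, g (p + (M:ℤ)) = g p) :
    ∑ p ∈ Finset.Icc (1:ℤ) (M:ℤ), g (p + 1) = ∑ p ∈ Finset.Icc (1:ℤ) (M:ℤ), g p := by
  have h1 : ∑ p ∈ Finset.Icc (1:ℤ) (M:ℤ), g (p + 1)
      = ∑ p ∈ Finset.Icc (2:ℤ) ((M:ℤ)+1), g p := by
    apply Finset.sum_nbij' (fun p => p + 1) (fun p => p - 1) <;>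
      simp_all [Finset.mem_Icc] <;> omega
  have h2 : Finset.Icc (1:ℤ) ((M:ℤ)+1) = insert (1:ℤ) (Finset.Icc (2:ℤ) ((M:ℤ)+1)) := by
    ext x; simp [Finset.mem_Icc]; omega
  have h3 : Finset.Icc (1:ℤ) ((M:ℤ)+1) = insert ((M:ℤ)+1) (Finset.Icc (1:ℤ) (M:ℤ)) := by
    ext x; simp [Finset.mem_Icc]; omega
  have h4 : g ((M:ℤ)+1) = g 1 := by rw [show (M:ℤ)+1 = 1 + (M:ℤ) by ring, hg]
  have e2 := Finset.sum_insert (f := g) (show (1:ℤ) ∉ Finset.Icc (2:ℤ) ((M:ℤ)+1) by simp)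
  have e3 := Finset.sum_insert (f := g) (show ((M:ℤ)+1) ∉ Finset.Icc (1:ℤ) (M:ℤ) by simp)
  rw [← h2] at e2; rw [← h3, h4] at e3
  rw [h1]; linarith

lemma shift_down_aux (M : ℕ) (hM : 1 ≤ M) (g : ℤ → ℝ) (hg : ∀ p : ℤ, g (p + (M:ℤ)) = g p) :
    ∑ p ∈ Finset.Icc (1:ℤ) (M:ℤ), g (p - 1) = ∑ p ∈ Finset.Icc (1:ℤ) (M:ℤ), g p := by
  have := shift_up_aux M hM (fun p => g (p - 1)) (fun p => by
    rw [show p + (M:ℤ) - 1 = (p-1) + (M:ℤ) by ring, hg])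
  simpa using this.symm

/-- summation by parts -/
lemma sbp_aux (M : ℕ) (hM : 1 ≤ M) (u z : ℤ → ℝ)
    (hu : ∀ p : ℤ, u (p + (M:ℤ)) = u p) (hz : ∀ p : ℤ, z (p + (M:ℤ)) = z p) :
    ∑ p ∈ Finset.Icc (1:ℤ) (M:ℤ), (u (p+1) - 2 * u p + u (p-1)) * z p
      = -∑ p ∈ Finset.Icc (1:ℤ) (M:ℤ), (u (p+1) - u p) * (z (p+1) - z p) := by
  have key : ∑ p ∈ Finset.Icc (1:ℤ) (M:ℤ), (u p - u (p-1)) * z p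
      = ∑ p ∈ Finset.Icc (1:ℤ) (M:ℤ), (u (p+1) - u p) * z (p+1) := by
    have hg : ∀ p : ℤ, (fun q => (u (q+1) - u q) * z (q+1)) (p + (M:ℤ))
        = (fun q => (u (q+1) - u q) * z (q+1)) p := by
      intro p; simp only []
      rw [show p + (M:ℤ) + 1 = (p+1) + (M:ℤ) by ring, hu, hu, hz]
    have := shift_down_aux M hM (fun q => (u (q+1) - u q) * z (q+1)) hg
    rw [← this]
    apply Finset.sum_congr rfl; intro p _
    rw [show p - 1 + 1 = p by ring]
  have expand : ∀ p : ℤ, (u (p+1) - 2 * u p + u (p-1)) * z p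
      = (u (p+1) - u p) * z p - (u p - u (p-1)) * z p := by intro p; ring
  calc ∑ p ∈ Finset.Icc (1:ℤ) (M:ℤ), (u (p+1) - 2 * u p + u (p-1)) * z p
      = ∑ p ∈ Finset.Icc (1:ℤ) (M:ℤ),
          ((u (p+1) - u p) * z p - (u p - u (p-1)) * z p) := by
        exact Finset.sum_congr rfl fun p _ => expand p
    _ = ∑ p ∈ Finset.Icc (1:ℤ) (M:ℤ), (u (p+1) - u p) * z p
        - ∑ p ∈ Finset.Icc (1:ℤ) (M:ℤ), (u p - u (p-1)) * z p := Finset.sum_sub_distrib _ _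
    _ = -∑ p ∈ Finset.Icc (1:ℤ) (M:ℤ), (u (p+1) - u p) * (z (p+1) - z p) := by
        rw [key, ← Finset.sum_sub_distrib, ← Finset.sum_neg_distrib]
        exact Finset.sum_congr rfl fun p _ => by ring

lemma snorm1_sq_aux (M : ℕ) (hM : 1 ≤ M) (h : ℝ) (hh : 0 < h) (u : ℤ → ℝ)
    (hu : Periodic M u) :
    snorm1 M h u ^ 2 = (∑ p ∈ Finset.Icc (1:ℤ) (M:ℤ), (u (p+1) - u p)^2) / h := by
  have hne : h ≠ 0 := ne_of_gt hh
  have hnn : 0 ≤ h * ∑ p ∈ Finset.Icc (1:ℤ) (M:ℤ), ((u p - u (p-1)) / h) ^ 2 :=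
    mul_nonneg hh.le (Finset.sum_nonneg fun p _ => sq_nonneg _)
  rw [snorm1, Real.sq_sqrt hnn]
  have hshift : ∑ p ∈ Finset.Icc (1:ℤ) (M:ℤ), ((u p - u (p-1)) / h) ^ 2
      = ∑ p ∈ Finset.Icc (1:ℤ) (M:ℤ), ((u (p+1) - u p) / h) ^ 2 := by
    have hg : ∀ p : ℤ, (fun q => ((u (q+1) - u q)/h)^2) (p + (M:ℤ))
        = (fun q => ((u (q+1) - u q)/h)^2) p := by
      intro p; simp only []
      rw [show p + (M:ℤ) + 1 = (p+1) + (M:ℤ) by ring, hu, hu]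
    have := shift_down_aux M hM (fun q => ((u (q+1) - u q)/h)^2) hg
    rw [← this]
    exact Finset.sum_congr rfl fun p _ => by rw [show p - 1 + 1 = p by ring]
  rw [hshift]
  rw [show ∑ p ∈ Finset.Icc (1:ℤ) (M:ℤ), ((u (p+1) - u p) / h) ^ 2
      = ∑ p ∈ Finset.Icc (1:ℤ) (M:ℤ), (u (p+1) - u p) ^ 2 / h^2 from
    Finset.sum_congr rfl fun p _ => by rw [div_pow]]
  rw [← Finset.sum_div]
  field_simp

lemma nrm_sq_aux (M : ℕ) (h : ℝ) (hh : 0 < h) (w : ℤ → ℝ) :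
    nrm M h w ^ 2 = h * ∑ p ∈ Finset.Icc (1:ℤ) (M:ℤ), w p * w p := by
  have hnn : 0 ≤ ip M h w w := mul_nonneg hh.le (Finset.sum_nonneg fun p _ => mul_self_nonneg _)
  rw [nrm, Real.sq_sqrt hnn, ip]

set_option maxHeartbeats 1600000
/-- discrete energy identity `⟨δ_t w, v̄⟩ = …` for the compact relation. -/
theorem stmt_13 (M : ℕ) (hM : 3 ≤ M) (h : ℝ) (hh : 0 < h) (L : ℝ) (hL : L = M * h)
    (τ : ℝ) (hτ : 0 < τ)
    (v0 v1 w0 w1 S0 S1 : ℤ → ℝ)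
    (hv0 : Periodic M v0) (hv1 : Periodic M v1)
    (hw0 : Periodic M w0) (hw1 : Periodic M w1)
    (hS0 : Periodic M S0) (hS1 : Periodic M S1)
    (hrel0 : ∀ p : ℤ, w0 p = Dxx h v0 p - h ^ 2 / 12 * Dxx h w0 p + S0 p)
    (hrel1 : ∀ p : ℤ, w1 p = Dxx h v1 p - h ^ 2 / 12 * Dxx h w1 p + S1 p) :
    ip M h (fun p => (w1 p - w0 p) / τ) (fun p => (v0 p + v1 p) / 2)
      = -(1 / (2 * τ)) *
          (((snorm1 M h v1) ^ 2 - (snorm1 M h v0) ^ 2)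
            + h ^ 2 / 12 * ((nrm M h w1) ^ 2 - (nrm M h w0) ^ 2)
            - h ^ 4 / 144 * ((snorm1 M h w1) ^ 2 - (snorm1 M h w0) ^ 2))
        + h ^ 2 / 12 *
            ip M h (fun p => (w1 p - w0 p) / τ) (fun p => (S0 p + S1 p) / 2)
        + ip M h (fun p => (S1 p - S0 p) / τ) (fun p => (v0 p + v1 p) / 2) := by
  have hM1 : 1 ≤ M := by omega
  have hne : h ≠ 0 := ne_of_gt hh
  have hτne : τ ≠ 0 := ne_of_gt hτ
  set I := Finset.Icc (1:ℤ) (M:ℤ) with hI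
  -- raw second-difference relations
  have raw0 : ∀ p : ℤ, v0 (p+1) - 2 * v0 p + v0 (p-1)
      = h^2 * w0 p + h^2/12 * (w0 (p+1) - 2 * w0 p + w0 (p-1)) - h^2 * S0 p := by
    intro p
    have hr := hrel0 p
    simp only [Dxx] at hr
    field_simp at hr
    refine mul_left_cancel₀ (show (12:ℝ)*h^2 ≠ 0 by positivity) ?_
    linear_combination (-h^2) * hr
  have raw1 : ∀ p : ℤ, v1 (p+1) - 2 * v1 p + v1 (p-1)
      = h^2 * w1 p + h^2/12 * (w1 (p+1) - 2 * w1 p + w1 (p-1)) - h^2 * S1 p := by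
    intro p
    have hr := hrel1 p
    simp only [Dxx] at hr
    field_simp at hr
    refine mul_left_cancel₀ (show (12:ℝ)*h^2 ≠ 0 by positivity) ?_
    linear_combination (-h^2) * hr
  -- basic sums
  set a1 := ∑ p ∈ I, (v1 (p+1) - v1 p)^2 with ha1
  set a0 := ∑ p ∈ I, (v0 (p+1) - v0 p)^2 with ha0
  set b1 := ∑ p ∈ I, w1 p * w1 p with hb1
  set b0 := ∑ p ∈ I, w0 p * w0 p with hb0
  set c1 := ∑ p ∈ I, (w1 (p+1) - w1 p)^2 with hc1
  set c0 := ∑ p ∈ I, (w0 (p+1) - w0 p)^2 with hc0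
  set d := ∑ p ∈ I, (w1 p - w0 p) * (S0 p + S1 p) with hd
  set e := ∑ p ∈ I, (S1 p - S0 p) * (v0 p + v1 p) with he
  set T := ∑ p ∈ I, (w1 p - w0 p) * (v0 p + v1 p) with hT
  -- first summation by parts : ∑ rawΔv * v̄ = -(a1 - a0)
  have hA : ∑ p ∈ I, ((v1 (p+1) - 2*v1 p + v1 (p-1)) - (v0 (p+1) - 2*v0 p + v0 (p-1)))
        * (v0 p + v1 p) = -(a1 - a0) := by
    have hu : ∀ p : ℤ, (fun q => v1 q - v0 q) (p + (M:ℤ)) = (fun q => v1 q - v0 q) p := by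
      intro p; simp only []; rw [hv0 p, hv1 p]
    have hz : ∀ p : ℤ, (fun q => v0 q + v1 q) (p + (M:ℤ)) = (fun q => v0 q + v1 q) p := by
      intro p; simp only []; rw [hv0 p, hv1 p]
    have hs := sbp_aux M hM1 (fun q => v1 q - v0 q) (fun q => v0 q + v1 q) hu hz
    calc ∑ p ∈ I, ((v1 (p+1) - 2*v1 p + v1 (p-1)) - (v0 (p+1) - 2*v0 p + v0 (p-1)))
          * (v0 p + v1 p)
        = ∑ p ∈ I, (v1 (p+1) - v0 (p+1) - 2*(v1 p - v0 p) + (v1 (p-1) - v0 (p-1)))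
          * (v0 p + v1 p) := Finset.sum_congr rfl fun p _ => by ring
      _ = -∑ p ∈ I, (v1 (p+1) - v0 (p+1) - (v1 p - v0 p))
          * (v0 (p+1) + v1 (p+1) - (v0 p + v1 p)) := hs
      _ = -∑ p ∈ I, ((v1 (p+1) - v1 p)^2 - (v0 (p+1) - v0 p)^2) := by
          rw [neg_inj]; exact Finset.sum_congr rfl fun p _ => by ring
      _ = -(a1 - a0) := by rw [Finset.sum_sub_distrib, ha1, ha0]
  -- self-adjointness : ∑ rawΔ(w1-w0) * v̄ = ∑ (w1-w0) * rawΔv̄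
  have hB : ∑ p ∈ I, ((w1 (p+1) - 2*w1 p + w1 (p-1)) - (w0 (p+1) - 2*w0 p + w0 (p-1)))
        * (v0 p + v1 p)
      = ∑ p ∈ I, (w1 p - w0 p)
        * ((v0 (p+1) + v1 (p+1)) - 2*(v0 p + v1 p) + (v0 (p-1) + v1 (p-1))) := by
    have hu : ∀ p : ℤ, (fun q => w1 q - w0 q) (p + (M:ℤ)) = (fun q => w1 q - w0 q) p := by
      intro p; simp only []; rw [hw0 p, hw1 p]
    have hz : ∀ p : ℤ, (fun q => v0 q + v1 q) (p + (M:ℤ)) = (fun q => v0 q + v1 q) p := by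
      intro p; simp only []; rw [hv0 p, hv1 p]
    have hs1 := sbp_aux M hM1 (fun q => w1 q - w0 q) (fun q => v0 q + v1 q) hu hz
    have hs2 := sbp_aux M hM1 (fun q => v0 q + v1 q) (fun q => w1 q - w0 q) hz hu
    calc ∑ p ∈ I, ((w1 (p+1) - 2*w1 p + w1 (p-1)) - (w0 (p+1) - 2*w0 p + w0 (p-1)))
          * (v0 p + v1 p)
        = ∑ p ∈ I, (w1 (p+1) - w0 (p+1) - 2*(w1 p - w0 p) + (w1 (p-1) - w0 (p-1)))
          * (v0 p + v1 p) := Finset.sum_congr rfl fun p _ => by ring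
      _ = -∑ p ∈ I, (w1 (p+1) - w0 (p+1) - (w1 p - w0 p))
          * (v0 (p+1) + v1 (p+1) - (v0 p + v1 p)) := hs1
      _ = -∑ p ∈ I, (v0 (p+1) + v1 (p+1) - (v0 p + v1 p))
          * (w1 (p+1) - w0 (p+1) - (w1 p - w0 p)) := by
          rw [neg_inj]; exact Finset.sum_congr rfl fun p _ => by ring
      _ = ∑ p ∈ I, (v0 (p+1) + v1 (p+1) - 2*(v0 p + v1 p) + (v0 (p-1) + v1 (p-1)))
          * (w1 p - w0 p) := hs2.symm
      _ = ∑ p ∈ I, (w1 p - w0 p)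
          * ((v0 (p+1) + v1 (p+1)) - 2*(v0 p + v1 p) + (v0 (p-1) + v1 (p-1))) :=
          Finset.sum_congr rfl fun p _ => by ring
  -- ∑ (w1-w0) * rawΔ(w0+w1) = -(c1 - c0)
  have hC : ∑ p ∈ I, (w1 p - w0 p)
        * ((w0 (p+1) + w1 (p+1)) - 2*(w0 p + w1 p) + (w0 (p-1) + w1 (p-1)))
      = -(c1 - c0) := by
    have hu : ∀ p : ℤ, (fun q => w0 q + w1 q) (p + (M:ℤ)) = (fun q => w0 q + w1 q) p := by
      intro p; simp only []; rw [hw0 p, hw1 p]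
    have hz : ∀ p : ℤ, (fun q => w1 q - w0 q) (p + (M:ℤ)) = (fun q => w1 q - w0 q) p := by
      intro p; simp only []; rw [hw0 p, hw1 p]
    have hs := sbp_aux M hM1 (fun q => w0 q + w1 q) (fun q => w1 q - w0 q) hu hz
    calc ∑ p ∈ I, (w1 p - w0 p)
          * ((w0 (p+1) + w1 (p+1)) - 2*(w0 p + w1 p) + (w0 (p-1) + w1 (p-1)))
        = ∑ p ∈ I, (w0 (p+1) + w1 (p+1) - 2*(w0 p + w1 p) + (w0 (p-1) + w1 (p-1)))
          * (w1 p - w0 p) := Finset.sum_congr rfl fun p _ => by ring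
      _ = -∑ p ∈ I, (w0 (p+1) + w1 (p+1) - (w0 p + w1 p))
          * (w1 (p+1) - w0 (p+1) - (w1 p - w0 p)) := hs
      _ = -∑ p ∈ I, ((w1 (p+1) - w1 p)^2 - (w0 (p+1) - w0 p)^2) := by
          rw [neg_inj]; exact Finset.sum_congr rfl fun p _ => by ring
      _ = -(c1 - c0) := by rw [Finset.sum_sub_distrib, hc1, hc0]
  -- expand ∑ (w1-w0) rawΔv̄ using the raw relations
  have hD : ∑ p ∈ I, (w1 p - w0 p)
        * ((v0 (p+1) + v1 (p+1)) - 2*(v0 p + v1 p) + (v0 (p-1) + v1 (p-1)))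
      = h^2 * (b1 - b0) + h^2/12 * (-(c1 - c0)) - h^2 * d := by
    have ptw : ∀ p ∈ I, (w1 p - w0 p)
        * ((v0 (p+1) + v1 (p+1)) - 2*(v0 p + v1 p) + (v0 (p-1) + v1 (p-1)))
        = h^2 * ((w1 p * w1 p - w0 p * w0 p))
          + h^2/12 * ((w1 p - w0 p)
              * ((w0 (p+1) + w1 (p+1)) - 2*(w0 p + w1 p) + (w0 (p-1) + w1 (p-1))))
          - h^2 * ((w1 p - w0 p) * (S0 p + S1 p)) := by
      intro p _
      linear_combination (w1 p - w0 p) * (raw0 p) + (w1 p - w0 p) * (raw1 p)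
    calc ∑ p ∈ I, (w1 p - w0 p)
          * ((v0 (p+1) + v1 (p+1)) - 2*(v0 p + v1 p) + (v0 (p-1) + v1 (p-1)))
        = ∑ p ∈ I, (h^2 * ((w1 p * w1 p - w0 p * w0 p))
          + h^2/12 * ((w1 p - w0 p)
              * ((w0 (p+1) + w1 (p+1)) - 2*(w0 p + w1 p) + (w0 (p-1) + w1 (p-1))))
          - h^2 * ((w1 p - w0 p) * (S0 p + S1 p))) := Finset.sum_congr rfl ptw
      _ = h^2 * (∑ p ∈ I, (w1 p * w1 p - w0 p * w0 p))
          + h^2/12 * (∑ p ∈ I, (w1 p - w0 p)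
              * ((w0 (p+1) + w1 (p+1)) - 2*(w0 p + w1 p) + (w0 (p-1) + w1 (p-1))))
          - h^2 * (∑ p ∈ I, (w1 p - w0 p) * (S0 p + S1 p)) := by
          rw [Finset.sum_sub_distrib, Finset.sum_add_distrib, ← Finset.mul_sum,
            ← Finset.mul_sum, ← Finset.mul_sum]
      _ = h^2 * (b1 - b0) + h^2/12 * (-(c1 - c0)) - h^2 * d := by
          rw [hC, hd, Finset.sum_sub_distrib, hb1, hb0]
  -- master identity for T
  have key : T = -((a1 - a0)/h^2) - h^2/12 * (b1 - b0) + h^2/144 * (c1 - c0)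
      + h^2/12 * d + e := by
    have ptw : ∀ p ∈ I, h^2 * ((w1 p - w0 p) * (v0 p + v1 p))
        = ((v1 (p+1) - 2*v1 p + v1 (p-1)) - (v0 (p+1) - 2*v0 p + v0 (p-1))) * (v0 p + v1 p)
          - h^2/12 * (((w1 (p+1) - 2*w1 p + w1 (p-1)) - (w0 (p+1) - 2*w0 p + w0 (p-1)))
              * (v0 p + v1 p))
          + h^2 * ((S1 p - S0 p) * (v0 p + v1 p)) := by
      intro p _
      linear_combination (v0 p + v1 p) * (raw0 p) - (v0 p + v1 p) * (raw1 p)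
    have hsum : h^2 * T
        = -(a1 - a0) - h^2/12 * (h^2 * (b1 - b0) + h^2/12 * (-(c1 - c0)) - h^2 * d)
          + h^2 * e := by
      calc h^2 * T = ∑ p ∈ I, h^2 * ((w1 p - w0 p) * (v0 p + v1 p)) := by
            rw [hT, Finset.mul_sum]
        _ = ∑ p ∈ I, (((v1 (p+1) - 2*v1 p + v1 (p-1)) - (v0 (p+1) - 2*v0 p + v0 (p-1)))
              * (v0 p + v1 p)
            - h^2/12 * (((w1 (p+1) - 2*w1 p + w1 (p-1)) - (w0 (p+1) - 2*w0 p + w0 (p-1)))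
                * (v0 p + v1 p))
            + h^2 * ((S1 p - S0 p) * (v0 p + v1 p))) := Finset.sum_congr rfl ptw
        _ = (∑ p ∈ I, ((v1 (p+1) - 2*v1 p + v1 (p-1)) - (v0 (p+1) - 2*v0 p + v0 (p-1)))
              * (v0 p + v1 p))
            - h^2/12 * (∑ p ∈ I, ((w1 (p+1) - 2*w1 p + w1 (p-1))
                - (w0 (p+1) - 2*w0 p + w0 (p-1))) * (v0 p + v1 p))
            + h^2 * (∑ p ∈ I, (S1 p - S0 p) * (v0 p + v1 p)) := by
            rw [Finset.sum_add_distrib, Finset.sum_sub_distrib, ← Finset.mul_sum,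
              ← Finset.mul_sum]
        _ = -(a1 - a0) - h^2/12 * (h^2 * (b1 - b0) + h^2/12 * (-(c1 - c0)) - h^2 * d)
            + h^2 * e := by rw [hA, hB, hD, he]
    have h2ne : h^2 ≠ 0 := pow_ne_zero 2 hne
    have hT2 : T = (-(a1 - a0) - h^2/12 * (h^2 * (b1 - b0) + h^2/12 * (-(c1 - c0)) - h^2 * d)
        + h^2 * e) / h^2 := by
      rw [eq_div_iff h2ne]; linear_combination hsum
    rw [hT2]; field_simp; ring
  -- ip computations
  have hip1 : ip M h (fun p => (w1 p - w0 p) / τ) (fun p => (v0 p + v1 p) / 2)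
      = h/(2*τ) * T := by
    rw [ip, hT, Finset.mul_sum, Finset.mul_sum, ← hI]
    exact Finset.sum_congr rfl fun p _ => by ring
  have hip2 : ip M h (fun p => (w1 p - w0 p) / τ) (fun p => (S0 p + S1 p) / 2)
      = h/(2*τ) * d := by
    rw [ip, hd, Finset.mul_sum, Finset.mul_sum, ← hI]
    exact Finset.sum_congr rfl fun p _ => by ring
  have hip3 : ip M h (fun p => (S1 p - S0 p) / τ) (fun p => (v0 p + v1 p) / 2)
      = h/(2*τ) * e := by
    rw [ip, he, Finset.mul_sum, Finset.mul_sum, ← hI]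
    exact Finset.sum_congr rfl fun p _ => by ring
  -- norm computations
  have hsv1 : snorm1 M h v1 ^ 2 = a1 / h := by rw [snorm1_sq_aux M hM1 h hh v1 hv1, ← hI, ha1]
  have hsv0 : snorm1 M h v0 ^ 2 = a0 / h := by rw [snorm1_sq_aux M hM1 h hh v0 hv0, ← hI, ha0]
  have hsw1 : snorm1 M h w1 ^ 2 = c1 / h := by rw [snorm1_sq_aux M hM1 h hh w1 hw1, ← hI, hc1]
  have hsw0 : snorm1 M h w0 ^ 2 = c0 / h := by rw [snorm1_sq_aux M hM1 h hh w0 hw0, ← hI, hc0]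
  have hn1 : nrm M h w1 ^ 2 = h * b1 := by rw [nrm_sq_aux M h hh w1, ← hI, hb1]
  have hn0 : nrm M h w0 ^ 2 = h * b0 := by rw [nrm_sq_aux M h hh w0, ← hI, hb0]
  rw [hip1, hip2, hip3, hsv1, hsv0, hsw1, hsw0, hn1, hn0, key]
  field_simp
  ring
end
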